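/- arXiv:1306.0634 — 4 statements merged into one kernel-verified Lean document; each statement's English description precedes it below -/
import Mathlib

section
/- Let s ≥ 2, r ≥ 4 be integers and S = {n1, n2, ..., ns} with n1 > n2 > ... > ns positive integers. If ns = r − 1 (that is, r − 1 ∈ S), then every r-uniform bi-hypergraph H = (X, B) which is a one-realization of S satisfies |X| ≥ r(r − 1) − 1. -/
/-!
Let `P` be the unique strict `(r - 1)`-coloring. With fewer than `r` classes, pigeonhole puts two
vertices of every bi-edge in a common class, so any partition into at most `r - 1` classes none of
which contains a bi-edge is strict. Hence every class of `P` has at least `r - 1` vertices: a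
smaller class could take a vertex from a larger class (a second strict `(r - 1)`-coloring) or,
if all other classes are singletons, merge with one of them (a strict `(r - 2)`-coloring, below
the minimum `r - 1` of `S`). Moreover two classes of size `r - 1` could exchange a vertex, so at
most one class has fewer than `r` vertices, and `|X| ≥ (r - 2) r + (r - 1) = r (r - 1) - 1`.
-/

/-- A bi-hypergraph: a finite vertex set together with a family of bi-edges,
each bi-edge being a subset of the vertex set. -/
structure BiHypergraph (α : Type*) [DecidableEq α] where
  verts : Finset α
  edges : Finset (Finset α)
  edges_sub : ∀ e ∈ edges, e ⊆ verts

namespace BiHypergraph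

variable {α : Type*} [DecidableEq α]

/-- `H` is `r`-uniform: every bi-edge has exactly `r` vertices. -/
def IsUniform (H : BiHypergraph α) (r : ℕ) : Prop :=
  ∀ e ∈ H.edges, e.card = r

/-- `P` is a strict coloring of `H`: a partition of the vertex set into nonempty
classes such that every bi-edge has at least two vertices lying in a common class
and at least two vertices lying in distinct classes.  A strict `k`-coloring is a
strict coloring `P` with `P.card = k`. -/
def IsStrictColoring (H : BiHypergraph α) (P : Finset (Finset α)) : Prop :=
  (∀ C ∈ P, C.Nonempty) ∧
  (∀ C ∈ P, C ⊆ H.verts) ∧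
  (∀ x ∈ H.verts, ∃! C, C ∈ P ∧ x ∈ C) ∧
  (∀ e ∈ H.edges,
    (∃ C ∈ P, 2 ≤ (e ∩ C).card) ∧
    (∃ x ∈ e, ∃ y ∈ e, ∃ C ∈ P, ∃ D ∈ P, C ≠ D ∧ x ∈ C ∧ y ∈ D))

/-- The feasible set of `H`: all `k` such that `H` admits a strict `k`-coloring. -/
def feasibleSet (H : BiHypergraph α) : Set ℕ :=
  {k | ∃ P : Finset (Finset α), H.IsStrictColoring P ∧ P.card = k}

/-- `H` is a one-realization of `S`: its feasible set is `S`, and for every `k`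
there is at most one partition which is a strict `k`-coloring of `H`. -/
def IsOneRealization (H : BiHypergraph α) (S : Finset ℕ) : Prop :=
  H.feasibleSet = ↑S ∧
  ∀ P Q : Finset (Finset α), H.IsStrictColoring P → H.IsStrictColoring Q →
    P.card = Q.card → P = Q

end BiHypergraph

theorem Finset.card_mul_le_sum_add_one {ι : Type*} [DecidableEq ι] {s : Finset ι} {f : ι → ℕ}
    {r : ℕ} (hf : ∀ i ∈ s, r ≤ f i + 1) (hlt : ∀ i ∈ s, ∀ j ∈ s, f i < r → f j < r → i = j) :
    s.card * r ≤ ∑ i ∈ s, f i + 1 := by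
  by_cases hex : ∃ i ∈ s, f i < r
  · obtain ⟨i, hi, hfi⟩ := hex
    have hrest : (s.erase i).card * r ≤ ∑ j ∈ s.erase i, f j := by
      refine smul_eq_mul (s.erase i).card r ▸ Finset.card_nsmul_le_sum _ _ _ fun j hj => ?_
      by_contra! hfj
      exact Finset.ne_of_mem_erase hj (hlt j (Finset.mem_of_mem_erase hj) i hi hfj hfi)
    rw [← Finset.card_erase_add_one hi, ← Finset.add_sum_erase s f hi]
    linarith [hf i hi]
  · push Not at hex
    exact (smul_eq_mul s.card r ▸ Finset.card_nsmul_le_sum s f r hex).trans (Nat.le_succ _)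

namespace BiHypergraph

variable {α : Type*} [DecidableEq α]

def IsIndepSet (H : BiHypergraph α) (A : Finset α) : Prop :=
  ∀ e ∈ H.edges, ¬ e ⊆ A

variable {H : BiHypergraph α} {r : ℕ}

theorem IsIndepSet.mono {A B : Finset α} (hB : H.IsIndepSet B) (hAB : A ⊆ B) : H.IsIndepSet A :=
  fun e he heA => hB e he (heA.trans hAB)

theorem IsUniform.isIndepSet_of_card_lt (hU : H.IsUniform r) {A : Finset α} (hA : A.card < r) :
    H.IsIndepSet A :=
  fun e he heA => (Finset.card_le_card heA).not_gt (hU e he ▸ hA)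

namespace IsStrictColoring

variable {P : Finset (Finset α)}

theorem eq_of_mem_of_mem (hP : H.IsStrictColoring P) {C D : Finset α} (hC : C ∈ P) (hD : D ∈ P)
    {x : α} (hxC : x ∈ C) (hxD : x ∈ D) : C = D :=
  (hP.2.2.1 x (hP.2.1 C hC hxC)).unique ⟨hC, hxC⟩ ⟨hD, hxD⟩

theorem pairwiseDisjoint (hP : H.IsStrictColoring P) : (P : Set (Finset α)).PairwiseDisjoint id :=
  fun _ hC _ hD hne => Finset.disjoint_left.mpr fun _ hxC hxD =>
    hne (hP.eq_of_mem_of_mem hC hD hxC hxD)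

theorem sup_id_eq (hP : H.IsStrictColoring P) : P.sup id = H.verts := by
  ext x
  simp only [Finset.mem_sup, id]
  exact ⟨fun ⟨C, hC, hx⟩ => hP.2.1 C hC hx, fun hx => (hP.2.2.1 x hx).exists⟩

theorem isIndepSet (hP : H.IsStrictColoring P) {C : Finset α} (hC : C ∈ P) : H.IsIndepSet C := by
  intro e he heC
  obtain ⟨x, hx, y, hy, D, hD, D', hD', hne, hxD, hyD'⟩ := (hP.2.2.2 e he).2
  exact hne ((hP.eq_of_mem_of_mem hD hC hxD (heC hx)).trans
    (hP.eq_of_mem_of_mem hD' hC hyD' (heC hy)).symm)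

theorem card_verts (hP : H.IsStrictColoring P) : H.verts.card = ∑ C ∈ P, C.card := by
  rw [← hP.sup_id_eq, Finset.sup_eq_biUnion, Finset.card_biUnion hP.pairwiseDisjoint]
  rfl

end IsStrictColoring

theorem isStrictColoring_of_card_lt (hU : H.IsUniform r) {P : Finset (Finset α)}
    (hne : ∀ C ∈ P, C.Nonempty) (hdisj : (P : Set (Finset α)).PairwiseDisjoint id)
    (hsup : P.sup id = H.verts) (hindep : ∀ C ∈ P, H.IsIndepSet C) (hcard : P.card < r) :
    H.IsStrictColoring P := by
  have hcover : ∀ x ∈ H.verts, ∃ C ∈ P, x ∈ C := by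
    intro x hx
    rw [← hsup] at hx
    simpa using Finset.mem_sup.mp hx
  refine ⟨hne, fun C hC => hsup ▸ Finset.le_sup (f := id) hC, fun x hx => ?_, fun e he => ⟨?_, ?_⟩⟩
  · obtain ⟨C, hC, hxC⟩ := hcover x hx
    refine ⟨C, ⟨hC, hxC⟩, fun D ⟨hD, hxD⟩ => ?_⟩
    by_contra hDC
    exact Finset.disjoint_left.mp (hdisj hD hC hDC) hxD hxC
  · choose! cls hcls hmem using hcover
    obtain ⟨x, hx, y, hy, hxy, hcxy⟩ := Finset.exists_ne_map_eq_of_card_lt_of_maps_to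
      (hU e he ▸ hcard) (f := cls) fun x hx => hcls x (H.edges_sub e he hx)
    refine ⟨cls x, hcls x (H.edges_sub e he hx), ?_⟩
    rw [← Finset.card_pair hxy]
    refine Finset.card_le_card fun z hz => ?_
    rcases Finset.mem_insert.mp hz with rfl | hz
    · exact Finset.mem_inter.mpr ⟨hx, hmem z (H.edges_sub e he hx)⟩
    · rw [Finset.mem_singleton.mp hz]
      exact Finset.mem_inter.mpr ⟨hy, hcxy ▸ hmem y (H.edges_sub e he hy)⟩
  · obtain ⟨x, hx⟩ := Finset.card_pos.mp (hU e he ▸ hcard.trans_le' (Nat.zero_le _))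
    obtain ⟨C, hC, hxC⟩ := hcover x (H.edges_sub e he hx)
    obtain ⟨y, hy, hyC⟩ := Finset.not_subset.mp (hindep C hC e he)
    obtain ⟨D, hD, hyD⟩ := hcover y (H.edges_sub e he hy)
    exact ⟨x, hx, y, hy, C, hC, D, hD, fun h => hyC (h ▸ hyD), hxC, hyD⟩

namespace IsStrictColoring

variable {P : Finset (Finset α)}

theorem replace (hU : H.IsUniform r) (hP : H.IsStrictColoring P) {C₁ C₂ : Finset α}
    (hC₁ : C₁ ∈ P) (hC₂ : C₂ ∈ P) (hne : C₁ ≠ C₂) {R : Finset (Finset α)}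
    (hRne : ∀ A ∈ R, A.Nonempty) (hRdisj : (R : Set (Finset α)).PairwiseDisjoint id)
    (hRsup : R.sup id = C₁ ∪ C₂) (hRindep : ∀ A ∈ R, H.IsIndepSet A)
    (hcard : R.card + (P.card - 2) < r) :
    H.IsStrictColoring (R ∪ (P \ {C₁, C₂})) ∧
      (R ∪ (P \ {C₁, C₂})).card = R.card + (P.card - 2) := by
  have hpair : {C₁, C₂} ⊆ P := Finset.insert_subset hC₁ (Finset.singleton_subset_iff.mpr hC₂)
  have hrest : ∀ D ∈ P \ {C₁, C₂}, D ∈ P ∧ Disjoint (C₁ ∪ C₂) D := by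
    intro D hD
    simp only [Finset.mem_sdiff, Finset.mem_insert, Finset.mem_singleton, not_or] at hD
    exact ⟨hD.1, Finset.disjoint_union_left.mpr ⟨hP.pairwiseDisjoint hC₁ hD.1 (Ne.symm hD.2.1),
      hP.pairwiseDisjoint hC₂ hD.1 (Ne.symm hD.2.2)⟩⟩
  have hcross : ∀ A ∈ R, ∀ D ∈ P \ {C₁, C₂}, Disjoint A D := fun A hA D hD =>
    (hrest D hD).2.mono_left (hRsup ▸ Finset.le_sup (f := id) hA)
  have hRrest : Disjoint R (P \ {C₁, C₂}) := Finset.disjoint_left.mpr fun A hA hA' =>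
    (hRne A hA).ne_empty (disjoint_self.mp (hcross A hA A hA'))
  have hcard' : (R ∪ (P \ {C₁, C₂})).card = R.card + (P.card - 2) := by
    rw [Finset.card_union_of_disjoint hRrest, Finset.card_sdiff_of_subset hpair,
      Finset.card_pair hne]
  refine ⟨isStrictColoring_of_card_lt hU ?_ ?_ ?_ ?_ (hcard'.symm ▸ hcard), hcard'⟩
  · simp only [Finset.mem_union]
    rintro A (hA | hA)
    exacts [hRne A hA, hP.1 A (hrest A hA).1]
  · rw [Finset.coe_union]
    exact hRdisj.union (hP.pairwiseDisjoint.subset (by simp)) fun A hA D hD _ => hcross A hA D hD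
  · rw [Finset.sup_union, hRsup, ← hP.sup_id_eq, ← Finset.union_sdiff_of_subset hpair,
      Finset.sup_union, Finset.sup_insert, Finset.sup_singleton, Finset.union_sdiff_of_subset hpair]
    rfl
  · simp only [Finset.mem_union]
    rintro A (hA | hA)
    exacts [hRindep A hA, hP.isIndepSet (hrest A hA).1]

theorem eq_of_exchange (hU : H.IsUniform r) (hP : H.IsStrictColoring P)
    (huniq : ∀ Q, H.IsStrictColoring Q → Q.card = P.card → Q = P) (hPr : P.card < r)
    {C₁ C₂ A B : Finset α} (hC₁ : C₁ ∈ P) (hC₂ : C₂ ∈ P) (hAB : A ∪ B = C₁ ∪ C₂)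
    (hdisj : Disjoint A B) (hB : B.Nonempty) (hA : H.IsIndepSet A) (hB' : H.IsIndepSet B)
    {x y : α} (hxA : x ∈ A) (hx : x ∈ C₁) (hyA : y ∈ A) (hy : y ∈ C₂) : C₁ = C₂ := by
  by_contra hne
  have hAB_ne : A ≠ B := fun h => Finset.disjoint_left.mp hdisj hxA (h ▸ hxA)
  have h2 : 2 ≤ P.card := Finset.one_lt_card.mpr ⟨C₁, hC₁, C₂, hC₂, hne⟩
  obtain ⟨hQ, hQcard⟩ := hP.replace hU hC₁ hC₂ hne (R := {A, B})
    (by simp [show A.Nonempty from ⟨x, hxA⟩, hB])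
    (by rw [Finset.coe_pair]; exact Set.pairwise_pair.mpr fun _ => ⟨hdisj, hdisj.symm⟩)
    (by simp [hAB]) (by simp [hA, hB'])
    (by rw [Finset.card_pair hAB_ne]; omega)
  have hAP : A ∈ P := by
    rw [← huniq _ hQ (by rw [hQcard, Finset.card_pair hAB_ne]; omega)]
    simp
  exact hne ((hP.eq_of_mem_of_mem hC₁ hAP hx hxA).trans (hP.eq_of_mem_of_mem hAP hC₂ hyA hy))

theorem le_card_add_one (hU : H.IsUniform r) (hP : H.IsStrictColoring P)
    (huniq : ∀ Q, H.IsStrictColoring Q → Q.card = P.card → Q = P) (hPr : P.card < r)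
    (h2 : 2 ≤ P.card) (hmin : P.card - 1 ∉ H.feasibleSet) {C : Finset α} (hC : C ∈ P) :
    r ≤ C.card + 1 := by
  by_contra! hsmall
  by_cases hbig : ∃ D ∈ P, D ≠ C ∧ 2 ≤ D.card
  · obtain ⟨D, hD, hDC, hD2⟩ := hbig
    obtain ⟨v, hv⟩ := Finset.card_pos.mp (by omega : 0 < D.card)
    obtain ⟨x, hx⟩ := hP.1 C hC
    have hCD : Disjoint C D := hP.pairwiseDisjoint hC hD hDC.symm
    refine hDC (hP.eq_of_exchange hU huniq hPr (A := insert v C) (B := D.erase v) hD hC ?_ ?_ ?_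
      ?_ ((hP.isIndepSet hD).mono (D.erase_subset v)) (C.mem_insert_self v) hv
      (Finset.mem_insert_of_mem hx) hx)
    · rw [Finset.insert_union, ← Finset.union_insert, Finset.insert_erase hv, Finset.union_comm]
    · exact Finset.disjoint_insert_left.mpr
        ⟨Finset.notMem_erase v D, hCD.mono_right (D.erase_subset v)⟩
    · exact Finset.card_pos.mp (by rw [Finset.card_erase_of_mem hv]; omega)
    · exact hU.isIndepSet_of_card_lt ((Finset.card_insert_le v C).trans_lt hsmall)
  · push Not at hbig
    obtain ⟨D, hD, hDC⟩ := Finset.exists_mem_ne h2 C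
    have hD1 := hbig D hD hDC
    obtain ⟨hQ, hQcard⟩ := hP.replace hU hC hD hDC.symm (R := {C ∪ D})
      (by simpa using (hP.1 C hC).mono Finset.subset_union_left) (by simp) (by simp)
      (by simpa using hU.isIndepSet_of_card_lt ((Finset.card_union_le C D).trans_lt (by omega)))
      (by rw [Finset.card_singleton]; omega)
    exact hmin ⟨_, hQ, by rw [hQcard, Finset.card_singleton]; omega⟩

theorem eq_of_card_lt (hU : H.IsUniform r) (hP : H.IsStrictColoring P)
    (huniq : ∀ Q, H.IsStrictColoring Q → Q.card = P.card → Q = P) (hPr : P.card < r)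
    {C₁ C₂ : Finset α} (hC₁ : C₁ ∈ P) (hC₂ : C₂ ∈ P) (h₁ : 2 ≤ C₁.card) (hr₁ : C₁.card < r)
    (hr₂ : C₂.card < r) : C₁ = C₂ := by
  by_contra hne
  have hdisj : Disjoint C₁ C₂ := hP.pairwiseDisjoint hC₁ hC₂ hne
  obtain ⟨v, hv⟩ := hP.1 C₁ hC₁
  obtain ⟨w, hw⟩ := hP.1 C₂ hC₂
  obtain ⟨x, hx⟩ := Finset.card_pos.mp (by rw [Finset.card_erase_of_mem hv]; omega :
    0 < (C₁.erase v).card)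
  have hvw : v ≠ w := fun h => Finset.disjoint_left.mp hdisj hv (h ▸ hw)
  refine hne (hP.eq_of_exchange hU huniq hPr (A := insert w (C₁.erase v))
    (B := insert v (C₂.erase w)) hC₁ hC₂ ?_ ?_ (Finset.insert_nonempty _ _) ?_ ?_
    (Finset.mem_insert_of_mem hx) (Finset.mem_of_mem_erase hx) (Finset.mem_insert_self _ _) hw)
  · ext z
    simp only [Finset.mem_union, Finset.mem_insert, Finset.mem_erase]
    grind
  · refine Finset.disjoint_insert_left.mpr ⟨?_, Finset.disjoint_insert_right.mpr
      ⟨Finset.notMem_erase v C₁, hdisj.mono (C₁.erase_subset v) (C₂.erase_subset w)⟩⟩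
    simp [hvw.symm]
  · exact hU.isIndepSet_of_card_lt <| (Finset.card_insert_le _ _).trans_lt <| by
      rw [Finset.card_erase_of_mem hv]; omega
  · exact hU.isIndepSet_of_card_lt <| (Finset.card_insert_le _ _).trans_lt <| by
      rw [Finset.card_erase_of_mem hw]; omega

end IsStrictColoring

end BiHypergraph

open BiHypergraph

theorem stmt4_general (s r : ℕ) (hs : 2 ≤ s) (hr : 4 ≤ r)
    (n : ℕ → ℕ)
    (hanti : ∀ i j, i < j → j < s → n j < n i)
    (hlast : n (s - 1) = r - 1)
    {α : Type*} [DecidableEq α] (H : BiHypergraph α)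
    (hU : H.IsUniform r)
    (hOR : H.IsOneRealization ((Finset.range s).image n)) :
    r * (r - 1) - 1 ≤ H.verts.card := by
  have hS : ∀ k ∈ (Finset.range s).image n, r - 1 ≤ k := by
    simp only [Finset.mem_image, Finset.mem_range, forall_exists_index, and_imp]
    rintro _ i hi rfl
    rcases (Nat.le_sub_one_of_lt hi).lt_or_eq with h | rfl
    exacts [hlast ▸ (hanti i (s - 1) h (by omega)).le, hlast.ge]
  obtain ⟨P, hP, hPcard⟩ : r - 1 ∈ H.feasibleSet :=
    hOR.1 ▸ Finset.mem_coe.mpr (Finset.mem_image.mpr ⟨s - 1, Finset.mem_range.mpr (by omega), hlast⟩)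
  have huniq : ∀ Q, H.IsStrictColoring Q → Q.card = P.card → Q = P :=
    fun Q hQ h => hOR.2 Q P hQ hP h
  have hmin : P.card - 1 ∉ H.feasibleSet := fun h => by
    have := hS _ (Finset.mem_coe.mp (hOR.1 ▸ h))
    omega
  have hPr : P.card < r := by omega
  have hbig : ∀ C ∈ P, r ≤ C.card + 1 := fun C hC =>
    hP.le_card_add_one hU huniq hPr (by omega) hmin hC
  have hsmall : ∀ C₁ ∈ P, ∀ C₂ ∈ P, C₁.card < r → C₂.card < r → C₁ = C₂ :=
    fun C₁ hC₁ C₂ hC₂ => hP.eq_of_card_lt hU huniq hPr hC₁ hC₂ (by linarith [hbig C₁ hC₁])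
  have hcount := Finset.card_mul_le_sum_add_one hbig hsmall
  rw [hPcard, ← hP.card_verts, mul_comm] at hcount
  omega

theorem stmt4 (s r : ℕ) (hs : 2 ≤ s) (hr : 4 ≤ r)
    (n : ℕ → ℕ) (hpos : ∀ i < s, 0 < n i)
    (hanti : ∀ i j, i < j → j < s → n j < n i)
    (hlast : n (s - 1) = r - 1)
    {α : Type*} [DecidableEq α] (H : BiHypergraph α)
    (hU : H.IsUniform r)
    (hOR : H.IsOneRealization ((Finset.range s).image n)) :
    r * (r - 1) - 1 ≤ H.verts.card :=
  stmt4_general s r hs hr n hanti hlast H hU hOR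
end

section
/- For every integer r ≥ 4, there exists an r-uniform bi-hypergraph with exactly r(r − 1) + 3 vertices which is a one-realization of {r + 2, r + 1}. -/
/-!
The vertices other than `0` and `1` are cut into `r - 1` blocks of size `r - 1` and a last
block of size `r`; the bi-edges are the `r`-sets meeting some block twice, except the last
block itself. If a set `S` with at least `r` vertices, two of them in a common block, contains
no bi-edge, then every `r`-subset of `S` through these two vertices is the last block, so `S`
is the last block. This applies to a class of a strict coloring, and to a transversal of it
through two vertices of one block lying in different classes. Each class therefore holds at
most `r` of the `r (r - 1) + 1` block vertices, so there are at least `r` classes; then only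
the last block can be split, and only when there are exactly `r` classes. Hence every block is
a class, exactly `r` classes would put `0` into the class of the last block, and the classes
left over partition `{0, 1}`: the only strict colorings are the blocks together with `{0, 1}`,
or together with `{0}` and `{1}`.
-/

namespace BiHypergraph

variable {α : Type*} [DecidableEq α] {H : BiHypergraph α} {P : Finset (Finset α)}

theorem isStrictColoring_of (hne : ∀ C ∈ P, C.Nonempty) (hsub : ∀ C ∈ P, C ⊆ H.verts)
    (hdisj : ∀ C ∈ P, ∀ D ∈ P, ∀ x ∈ C, x ∈ D → C = D)
    (hcover : ∀ x ∈ H.verts, ∃ C ∈ P, x ∈ C)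
    (hpair : ∀ e ∈ H.edges, ∃ C ∈ P, 2 ≤ (e ∩ C).card)
    (hmono : ∀ e ∈ H.edges, ∀ C ∈ P, ¬ e ⊆ C) : H.IsStrictColoring P := by
  refine ⟨hne, hsub, fun x hx => ?_, fun e he => ⟨hpair e he, ?_⟩⟩
  · obtain ⟨C, hC, hxC⟩ := hcover x hx
    exact ⟨C, ⟨hC, hxC⟩, fun D ⟨hD, hxD⟩ => hdisj D hD C hC x hxD hxC⟩
  · obtain ⟨C, hC, hC2⟩ := hpair e he
    obtain ⟨x, hx⟩ : (e ∩ C).Nonempty := Finset.card_pos.1 (by omega)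
    have hxe := (Finset.mem_inter.1 hx).1
    obtain ⟨D, hD, hxD⟩ := hcover x (H.edges_sub e he hxe)
    obtain ⟨y, hye, hyD⟩ := Finset.not_subset.1 (hmono e he D hD)
    obtain ⟨E, hE, hyE⟩ := hcover y (H.edges_sub e he hye)
    exact ⟨x, hxe, y, hye, D, hD, E, hE, fun h => hyD (h ▸ hyE), hxD, hyE⟩

namespace IsStrictColoring

theorem eq_of_mem (hP : H.IsStrictColoring P) {C D : Finset α} {x : α} (hC : C ∈ P)
    (hD : D ∈ P) (hxC : x ∈ C) (hxD : x ∈ D) : C = D := by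
  obtain ⟨U, _, hU⟩ := hP.2.2.1 x (hP.2.1 C hC hxC)
  exact (hU C ⟨hC, hxC⟩).trans (hU D ⟨hD, hxD⟩).symm

theorem exists_mem (hP : H.IsStrictColoring P) {x : α} (hx : x ∈ H.verts) :
    ∃ C ∈ P, x ∈ C :=
  (hP.2.2.1 x hx).exists

theorem not_subset (hP : H.IsStrictColoring P) {e C : Finset α} (he : e ∈ H.edges)
    (hC : C ∈ P) : ¬ e ⊆ C := by
  intro heC
  obtain ⟨x, hx, y, hy, D, hD, E, hE, hDE, hxD, hyE⟩ := (hP.2.2.2 e he).2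
  exact hDE ((hP.eq_of_mem hD hC hxD (heC hx)).trans (hP.eq_of_mem hE hC hyE (heC hy)).symm)

theorem card_eq_sum_card_inter (hP : H.IsStrictColoring P) {A : Finset α}
    (hA : A ⊆ H.verts) : A.card = ∑ C ∈ P, (A ∩ C).card := by
  have hA : A = P.biUnion (A ∩ ·) := by
    ext x
    simp only [Finset.mem_biUnion, Finset.mem_inter]
    refine ⟨fun hx => ?_, fun ⟨_, _, hx, _⟩ => hx⟩
    obtain ⟨C, hC, hxC⟩ := hP.exists_mem (hA hx)
    exact ⟨C, hC, hx, hxC⟩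
  conv_lhs => rw [hA]
  refine Finset.card_biUnion fun C hC D hD hCD => Finset.disjoint_left.2 fun x hxC hxD => ?_
  exact hCD (hP.eq_of_mem hC hD (Finset.mem_inter.1 hxC).2 (Finset.mem_inter.1 hxD).2)

/-- One vertex from each class, `x` from `C` and `y` from `D`: no two of them share a class,
so no bi-edge lies inside. -/
theorem exists_transversal (hP : H.IsStrictColoring P) {C D : Finset α} {x y : α}
    (hC : C ∈ P) (hD : D ∈ P) (hxC : x ∈ C) (hyD : y ∈ D) (hCD : C ≠ D) :
    ∃ T ⊆ H.verts, x ∈ T ∧ y ∈ T ∧ T.card = P.card ∧ ∀ e ∈ H.edges, ¬ e ⊆ T := by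
  have hrep : ∀ Z ∈ P, ∃ t ∈ Z, (x ∈ Z → t = x) ∧ (y ∈ Z → t = y) := by
    intro Z hZ
    by_cases hxZ : x ∈ Z
    · refine ⟨x, hxZ, fun _ => rfl, fun hyZ => absurd ?_ hCD⟩
      exact (hP.eq_of_mem hC hZ hxC hxZ).trans (hP.eq_of_mem hZ hD hyZ hyD)
    by_cases hyZ : y ∈ Z
    · exact ⟨y, hyZ, fun h => absurd h hxZ, fun _ => rfl⟩
    obtain ⟨t, ht⟩ := hP.1 Z hZ
    exact ⟨t, ht, fun h => absurd h hxZ, fun h => absurd h hyZ⟩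
  have : Nonempty α := ⟨x⟩
  choose! g hgZ hg using hrep
  have hinj : Set.InjOn g P := fun Z hZ Z' hZ' h =>
    hP.eq_of_mem hZ hZ' (hgZ Z hZ) (h ▸ hgZ Z' hZ')
  refine ⟨P.image g, ?_, ?_, ?_, Finset.card_image_of_injOn hinj, fun e he heT => ?_⟩
  · intro v hv
    obtain ⟨Z, hZ, rfl⟩ := Finset.mem_image.1 hv
    exact hP.2.1 Z hZ (hgZ Z hZ)
  · exact Finset.mem_image.2 ⟨C, hC, (hg C hC).1 hxC⟩
  · exact Finset.mem_image.2 ⟨D, hD, (hg D hD).2 hyD⟩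
  obtain ⟨Z, hZ, hZ2⟩ := (hP.2.2.2 e he).1
  have hle : (e ∩ Z).card ≤ 1 := by
    have hrepZ : ∀ w ∈ e ∩ Z, w = g Z := by
      intro w hw
      obtain ⟨Z', hZ', rfl⟩ := Finset.mem_image.1 (heT (Finset.mem_inter.1 hw).1)
      rw [hP.eq_of_mem hZ' hZ (hgZ Z' hZ') (Finset.mem_inter.1 hw).2]
    exact Finset.card_le_one.2 fun u hu v hv => (hrepZ u hu).trans (hrepZ v hv).symm
  omega

end IsStrictColoring

theorem isOneRealization_of_forall_eq_or_eq {P Q : Finset (Finset α)}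
    (hP : H.IsStrictColoring P) (hQ : H.IsStrictColoring Q) (hPQ : P.card ≠ Q.card)
    (hall : ∀ R, H.IsStrictColoring R → R = P ∨ R = Q) :
    H.IsOneRealization {P.card, Q.card} := by
  refine ⟨Set.ext fun k => ⟨?_, ?_⟩, fun R S hR hS hRS => ?_⟩
  · rintro ⟨R, hR, rfl⟩
    rcases hall R hR with rfl | rfl <;> simp
  · intro hk
    rcases (by simpa using hk : k = P.card ∨ k = Q.card) with rfl | rfl
    exacts [⟨P, hP, rfl⟩, ⟨Q, hQ, rfl⟩]
  · rcases hall R hR with rfl | rfl <;> rcases hall S hS with rfl | rfl <;> first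
      | rfl | exact absurd hRS hPQ | exact absurd hRS.symm hPQ

end BiHypergraph

namespace BlockHypergraph

open Finset BiHypergraph

variable {r i j x : ℕ}

def verts (r : ℕ) : Finset ℕ := range (r * (r - 1) + 3)

def blockVerts (r : ℕ) : Finset ℕ := Ico 2 (r * (r - 1) + 3)

/-- The block vertices `2, …, r (r - 1) + 2` are cut into consecutive blocks: blocks
`0, …, r - 2` of size `r - 1`, then the last block `r - 1` of size `r`. -/
def blockOf (r x : ℕ) : ℕ := min ((x - 2) / (r - 1)) (r - 1)

def block (r i : ℕ) : Finset ℕ := (blockVerts r).filter (blockOf r · = i)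

def blocks (r : ℕ) : Finset (Finset ℕ) := (range r).image (block r)

def edges (r : ℕ) : Finset (Finset ℕ) :=
  (powersetCard r (verts r)).filter
    fun e => e ≠ block r (r - 1) ∧ ∃ i < r, 2 ≤ (e ∩ block r i).card

theorem mem_edges {e : Finset ℕ} : e ∈ edges r ↔ e ⊆ verts r ∧ e.card = r ∧
    e ≠ block r (r - 1) ∧ ∃ i < r, 2 ≤ (e ∩ block r i).card := by
  simp only [edges, mem_filter, mem_powersetCard, and_assoc]

def hypergraph (r : ℕ) : BiHypergraph ℕ :=
  ⟨verts r, edges r, fun _ he => (mem_edges.1 he).1⟩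

def joinedColoring (r : ℕ) : Finset (Finset ℕ) := {{0, 1}} ∪ blocks r

def splitColoring (r : ℕ) : Finset (Finset ℕ) := {{0}, {1}} ∪ blocks r

theorem hypergraph_isUniform (r : ℕ) : (hypergraph r).IsUniform r :=
  fun _ he => (mem_edges.1 he).2.1

theorem card_verts (r : ℕ) : (verts r).card = r * (r - 1) + 3 := card_range _

theorem zero_mem_verts : 0 ∈ verts r := by simp [verts]

theorem one_mem_verts : 1 ∈ verts r := by simp [verts]

theorem card_blockVerts (r : ℕ) : (blockVerts r).card = r * (r - 1) + 1 := by
  simp [blockVerts]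

theorem blockVerts_subset_verts : blockVerts r ⊆ verts r := fun x hx => by
  simp only [blockVerts, verts, mem_Ico, mem_range] at hx ⊢; omega

theorem mem_block : x ∈ block r i ↔ x ∈ blockVerts r ∧ blockOf r x = i := mem_filter

theorem block_subset_verts : block r i ⊆ verts r :=
  (filter_subset _ _).trans blockVerts_subset_verts

theorem two_le_of_mem_block (hx : x ∈ block r i) : 2 ≤ x :=
  (mem_Ico.1 (mem_block.1 hx).1).1

theorem zero_notMem_block : 0 ∉ block r i := fun h => by
  have := two_le_of_mem_block h; omega

theorem mem_block_blockOf (hx : x ∈ verts r) (h2 : 2 ≤ x) : x ∈ block r (blockOf r x) :=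
  mem_block.2 ⟨mem_Ico.2 ⟨h2, mem_range.1 hx⟩, rfl⟩

theorem eq_of_mem_block (hi : x ∈ block r i) (hj : x ∈ block r j) : i = j :=
  (mem_block.1 hi).2.symm.trans (mem_block.1 hj).2

theorem lt_of_mem_block (hr : 0 < r) (hx : x ∈ block r i) : i < r := by
  rw [← (mem_block.1 hx).2, blockOf]; omega

theorem block_last (hr : 2 ≤ r) :
    block r (r - 1) = Ico (2 + (r - 1) * (r - 1)) (r * (r - 1) + 3) := by
  ext x
  simp only [mem_block, blockVerts, blockOf, mem_Ico, min_eq_right_iff,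
    Nat.le_div_iff_mul_le (by omega : 0 < r - 1)]
  omega

theorem block_of_lt (hi : i < r - 1) :
    block r i = Ico (2 + i * (r - 1)) (2 + i * (r - 1) + (r - 1)) := by
  have hlt : (i + 1) * (r - 1) ≤ r * (r - 1) := Nat.mul_le_mul_right _ (by omega)
  have hmin : ∀ q, min q (r - 1) = i ↔ q = i := fun q => by omega
  ext x
  simp only [mem_block, blockVerts, blockOf, mem_Ico, hmin,
    Nat.div_eq_iff (by omega : 0 < r - 1)]
  rw [add_one_mul] at hlt
  omega

theorem card_block_last (hr : 2 ≤ r) : (block r (r - 1)).card = r := by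
  obtain ⟨s, rfl⟩ : ∃ s, r = s + 1 := ⟨r - 1, by omega⟩
  rw [block_last hr, Nat.card_Ico, Nat.add_sub_cancel, add_mul, one_mul]
  omega

theorem card_block_of_lt (hi : i < r - 1) : (block r i).card = r - 1 := by
  rw [block_of_lt hi, Nat.card_Ico]; omega

theorem sub_one_le_card_block (hr : 2 ≤ r) (hi : i < r) : r - 1 ≤ (block r i).card := by
  rcases (by omega : i < r - 1 ∨ i = r - 1) with hi | rfl
  · rw [card_block_of_lt hi]
  · rw [card_block_last hr]; omega

theorem block_nonempty (hr : 3 ≤ r) (hi : i < r) : (block r i).Nonempty :=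
  card_pos.1 (by have := sub_one_le_card_block (by omega) hi; omega)

theorem card_image_block {n : ℕ} (hr : 3 ≤ r) (hn : n ≤ r) :
    ((range n).image (block r)).card = n := by
  rw [card_image_of_injOn, card_range]
  intro i hi j _ h
  obtain ⟨x, hx⟩ := block_nonempty hr (i := i) (by simp at hi; omega)
  exact eq_of_mem_block hx (h ▸ hx)

theorem mem_blocks {C : Finset ℕ} : C ∈ blocks r ↔ ∃ i < r, block r i = C := by
  simp [blocks]

theorem notMem_blocks {C : Finset ℕ} (hx : x ∈ C) (hx2 : x < 2) : C ∉ blocks r := fun h => by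
  obtain ⟨i, -, rfl⟩ := mem_blocks.1 h
  have := two_le_of_mem_block hx
  omega

theorem not_subset_block_of_mem_edges {e : Finset ℕ} (hr : 2 ≤ r) (he : e ∈ edges r) :
    ¬ e ⊆ block r i := by
  obtain ⟨-, hcard, hne, -⟩ := mem_edges.1 he
  intro heW
  have hle := card_le_card heW
  by_cases hi : i = r - 1
  · subst hi
    exact hne (eq_of_subset_of_card_le heW (by rw [card_block_last hr]; omega))
  · by_cases hi' : i < r - 1
    · rw [card_block_of_lt hi'] at hle
      omega
    · obtain ⟨x, hx⟩ := card_pos.1 (by omega : 0 < e.card)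
      have := lt_of_mem_block (by omega) (heW hx)
      omega

theorem eq_block_last_of_forall_not_subset (hr : 3 ≤ r) {S : Finset ℕ} (hS : S ⊆ verts r)
    (hcard : r ≤ S.card) {x y : ℕ} (hxS : x ∈ S) (hyS : y ∈ S) (hx : x ∈ block r i)
    (hy : y ∈ block r i) (hxy : x ≠ y) (hfree : ∀ e ∈ edges r, ¬ e ⊆ S) :
    S = block r (r - 1) := by
  refine eq_of_subset_of_card_le (fun z hzS => ?_) (by rwa [card_block_last (by omega)])
  obtain ⟨e, hxyz, heS, he⟩ := exists_subsuperset_card_eq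
    (insert_subset hxS (insert_subset hyS (singleton_subset_iff.2 hzS)))
    (card_le_three.trans hr) hcard
  by_contra hz
  refine hfree e (mem_edges.2 ⟨heS.trans hS, he, fun h => hz (h ▸ hxyz (by simp)), i,
    lt_of_mem_block (by omega) hx, ?_⟩) heS
  exact one_lt_card.2
    ⟨x, mem_inter.2 ⟨hxyz (by simp), hx⟩, y, mem_inter.2 ⟨hxyz (by simp), hy⟩, hxy⟩

theorem isStrictColoring_union_blocks (hr : 3 ≤ r) {A : Finset (Finset ℕ)}
    (hA : ∀ C ∈ A, C.Nonempty ∧ C ⊆ {0, 1})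
    (hAdisj : ∀ C ∈ A, ∀ D ∈ A, ∀ x ∈ C, x ∈ D → C = D)
    (h0 : ∃ C ∈ A, 0 ∈ C) (h1 : ∃ C ∈ A, 1 ∈ C) :
    (hypergraph r).IsStrictColoring (A ∪ blocks r) := by
  have hlt : ∀ {C x}, C ∈ A → x ∈ C → x < 2 := fun hC hx => by
    have := (hA _ hC).2 hx
    simp only [mem_insert, mem_singleton] at this
    omega
  refine isStrictColoring_of ?_ ?_ ?_ ?_ ?_ ?_ <;> simp only [mem_union, mem_blocks]
  · rintro C (hC | ⟨i, hi, rfl⟩)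
    exacts [(hA C hC).1, block_nonempty hr hi]
  · rintro C (hC | ⟨i, hi, rfl⟩) x hx
    · have := hlt hC hx
      simp only [hypergraph, verts, mem_range]
      omega
    · exact block_subset_verts hx
  · rintro C (hC | ⟨i, hi, rfl⟩) D (hD | ⟨j, hj, rfl⟩) x hxC hxD
    · exact hAdisj C hC D hD x hxC hxD
    · exact absurd (two_le_of_mem_block hxD) (by have := hlt hC hxC; omega)
    · exact absurd (two_le_of_mem_block hxC) (by have := hlt hD hxD; omega)
    · rw [eq_of_mem_block hxC hxD]
  · intro x hx
    rcases (by omega : x = 0 ∨ x = 1 ∨ 2 ≤ x) with rfl | rfl | hx2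
    · obtain ⟨C, hC, h⟩ := h0
      exact ⟨C, Or.inl hC, h⟩
    · obtain ⟨C, hC, h⟩ := h1
      exact ⟨C, Or.inl hC, h⟩
    · have hxb := mem_block_blockOf hx hx2
      exact ⟨_, Or.inr ⟨_, lt_of_mem_block (by omega) hxb, rfl⟩, hxb⟩
  · intro e he
    obtain ⟨-, -, -, i, hi, h2⟩ := mem_edges.1 he
    exact ⟨block r i, Or.inr ⟨i, hi, rfl⟩, h2⟩
  · rintro e he C (hC | ⟨i, hi, rfl⟩) heC
    · have := card_le_card (heC.trans (hA C hC).2)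
      have := card_le_two (a := 0) (b := 1)
      rw [(mem_edges.1 he).2.1] at *
      omega
    · exact not_subset_block_of_mem_edges (by omega) he heC

theorem isStrictColoring_joinedColoring (hr : 3 ≤ r) :
    (hypergraph r).IsStrictColoring (joinedColoring r) :=
  isStrictColoring_union_blocks hr (by simp) (by simp) (by simp) (by simp)

theorem isStrictColoring_splitColoring (hr : 3 ≤ r) :
    (hypergraph r).IsStrictColoring (splitColoring r) :=
  isStrictColoring_union_blocks hr (by simp) (by simp) (by simp) (by simp)

theorem card_joinedColoring (hr : 3 ≤ r) : (joinedColoring r).card = r + 1 := by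
  rw [joinedColoring, card_union_of_disjoint, blocks, card_image_block hr le_rfl]
  · simp [add_comm]
  · simp only [disjoint_singleton_left]
    exact notMem_blocks (x := 0) (by simp) (by omega)

theorem card_splitColoring (hr : 3 ≤ r) : (splitColoring r).card = r + 2 := by
  rw [splitColoring, card_union_of_disjoint, blocks, card_image_block hr le_rfl]
  · simp [add_comm]
  · simp only [disjoint_insert_left, disjoint_singleton_left]
    exact ⟨notMem_blocks (x := 0) (by simp) (by omega),
      notMem_blocks (x := 1) (by simp) (by omega)⟩

section StrictColoring

variable {P : Finset (Finset ℕ)} {C : Finset ℕ}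

theorem eq_block_last_of_card_le (hP : (hypergraph r).IsStrictColoring P) (hr : 3 ≤ r)
    (hC : C ∈ P) (hcard : r ≤ C.card) {x y : ℕ} (hxC : x ∈ C) (hyC : y ∈ C)
    (hx : x ∈ block r i) (hy : y ∈ block r i) (hxy : x ≠ y) : C = block r (r - 1) :=
  eq_block_last_of_forall_not_subset hr (hP.2.1 C hC) hcard hxC hyC hx hy hxy
    fun _ he => hP.not_subset he hC

theorem card_blockVerts_inter_le (hP : (hypergraph r).IsStrictColoring P) (hr : 3 ≤ r)
    (hC : C ∈ P) : (blockVerts r ∩ C).card ≤ r := by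
  by_contra! hlt
  have hmaps : Set.MapsTo (blockOf r) (blockVerts r ∩ C : Finset ℕ) (range r : Finset ℕ) :=
    fun x _ => mem_range.2 (by simp only [blockOf]; omega)
  obtain ⟨x, hx, y, hy, hxy, hblock⟩ :=
    exists_ne_map_eq_of_card_lt_of_maps_to (by rwa [card_range]) hmaps
  have hmem : ∀ z ∈ blockVerts r ∩ C, z ∈ block r (blockOf r z) := fun z hz =>
    mem_block.2 ⟨(mem_inter.1 hz).1, rfl⟩
  have hcard : r < C.card := hlt.trans_le (card_le_card inter_subset_right)
  have hCl := eq_block_last_of_card_le hP hr hC hcard.le (mem_inter.1 hx).2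
    (mem_inter.1 hy).2 (hmem x hx) (hblock ▸ hmem y hy) hxy
  rw [hCl, card_block_last (by omega)] at hcard
  exact lt_irrefl _ hcard

theorem le_card_of_isStrictColoring (hP : (hypergraph r).IsStrictColoring P) (hr : 3 ≤ r) :
    r ≤ P.card := by
  have hsum := hP.card_eq_sum_card_inter blockVerts_subset_verts
  have hle : ∑ C ∈ P, (blockVerts r ∩ C).card ≤ P.card * r := by
    simpa using sum_le_sum fun C hC => card_blockVerts_inter_le hP hr hC
  by_contra! hlt
  have : P.card * r ≤ (r - 1) * r := Nat.mul_le_mul_right _ (by omega)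
  rw [card_blockVerts, mul_comm (r - 1)] at *
  omega

theorem card_eq_and_last_of_split (hP : (hypergraph r).IsStrictColoring P) (hr : 3 ≤ r)
    {C D : Finset ℕ} (hC : C ∈ P) (hD : D ∈ P) (hCD : C ≠ D) {x y : ℕ} (hxC : x ∈ C)
    (hyD : y ∈ D) (hx : x ∈ block r i) (hy : y ∈ block r i) : P.card = r ∧ i = r - 1 := by
  obtain ⟨T, hTV, hxT, hyT, hTcard, hTfree⟩ := hP.exists_transversal hC hD hxC hyD hCD
  have hxy : x ≠ y := fun h => hCD (hP.eq_of_mem hC hD hxC (h ▸ hyD))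
  have hT := eq_block_last_of_forall_not_subset hr hTV
    (hTcard ▸ le_card_of_isStrictColoring hP hr) hxT hyT hx hy hxy hTfree
  exact ⟨hTcard.symm.trans (hT ▸ card_block_last (by omega)), eq_of_mem_block hx (hT ▸ hxT)⟩

theorem eq_block_of_block_subset (hP : (hypergraph r).IsStrictColoring P) (hr : 3 ≤ r)
    (hC : C ∈ P) (hi : i < r) (hsub : block r i ⊆ C) : C = block r i := by
  have hcard := sub_one_le_card_block (by omega) hi
  by_cases hCr : r ≤ C.card
  · obtain ⟨x, hx, y, hy, hxy⟩ := one_lt_card.1 (by omega : 1 < (block r i).card)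
    have hCl : C = block r (r - 1) :=
      eq_block_last_of_card_le hP hr hC hCr (hsub hx) (hsub hy) hx hy hxy
    have hxl : x ∈ block r (r - 1) := hCl ▸ hsub hx
    rwa [eq_of_mem_block hxl hx] at hCl
  · exact (eq_of_subset_of_card_le hsub (by omega)).symm

theorem block_mem_of_isStrictColoring (hP : (hypergraph r).IsStrictColoring P) (hr : 3 ≤ r)
    (hi : i < r) (h : i < r - 1 ∨ r < P.card) : block r i ∈ P := by
  obtain ⟨x, hx⟩ := block_nonempty hr hi
  obtain ⟨C, hC, hxC⟩ := hP.exists_mem (block_subset_verts hx)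
  suffices hsub : block r i ⊆ C from eq_block_of_block_subset hP hr hC hi hsub ▸ hC
  intro y hy
  obtain ⟨D, hD, hyD⟩ := hP.exists_mem (block_subset_verts hy)
  by_cases hCD : C = D
  · exact hCD ▸ hyD
  · have := card_eq_and_last_of_split hP hr hC hD hCD hxC hyD hx hy
    omega

theorem card_ne_of_isStrictColoring (hP : (hypergraph r).IsStrictColoring P) (hr : 3 ≤ r) :
    P.card ≠ r := by
  intro hPr
  have hsmall : (range (r - 1)).image (block r) ⊆ P := fun C hC => by
    obtain ⟨j, hj, rfl⟩ := mem_image.1 hC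
    exact block_mem_of_isStrictColoring hP hr (by simp at hj; omega) (Or.inl (by simpa using hj))
  obtain ⟨Z, hZ, h0Z⟩ := hP.exists_mem zero_mem_verts
  have hZsmall : Z ∉ (range (r - 1)).image (block r) := fun h => by
    obtain ⟨j, -, rfl⟩ := mem_image.1 h
    exact zero_notMem_block h0Z
  have hPeq : insert Z ((range (r - 1)).image (block r)) = P := by
    refine eq_of_subset_of_card_le (insert_subset hZ hsmall) ?_
    rw [card_insert_of_notMem hZsmall, card_image_block hr (by omega)]
    omega
  have hlast : block r (r - 1) ⊆ Z := fun w hw => by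
    obtain ⟨D, hD, hwD⟩ := hP.exists_mem (block_subset_verts hw)
    rw [← hPeq, mem_insert] at hD
    rcases hD with rfl | hD
    · exact hwD
    · obtain ⟨j, hj, rfl⟩ := mem_image.1 hD
      have := eq_of_mem_block hwD hw
      simp at hj
      omega
  exact zero_notMem_block (eq_block_of_block_subset hP hr hZ (by omega) hlast ▸ h0Z)

theorem eq_pair_union_blocks (hP : (hypergraph r).IsStrictColoring P) (hr : 3 ≤ r)
    (hblocks : blocks r ⊆ P) {C₀ C₁ : Finset ℕ} (hC₀ : C₀ ∈ P) (hC₁ : C₁ ∈ P) (h0 : 0 ∈ C₀)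
    (h1 : 1 ∈ C₁) : P = {C₀, C₁} ∪ blocks r ∧ C₀ ⊆ {0, 1} ∧ C₁ ⊆ {0, 1} := by
  have hclass : ∀ C ∈ P, ∀ z ∈ C, 2 ≤ z → C ∈ blocks r := fun C hC z hz h2 => by
    have hzb := mem_block_blockOf (hP.2.1 C hC hz) h2
    have hb : block r (blockOf r z) ∈ blocks r :=
      mem_blocks.2 ⟨_, lt_of_mem_block (by omega) hzb, rfl⟩
    exact hP.eq_of_mem hC (hblocks hb) hz hzb ▸ hb
  have hsub : ∀ C ∈ P, ∀ v ∈ C, v < 2 → C ⊆ {0, 1} := fun C hC v hv hv2 z hz => by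
    have : z < 2 := not_le.1 fun hz2 => notMem_blocks hv hv2 (hclass C hC z hz hz2)
    simp only [mem_insert, mem_singleton]
    omega
  refine ⟨?_, hsub C₀ hC₀ 0 h0 (by omega), hsub C₁ hC₁ 1 h1 (by omega)⟩
  ext C
  simp only [mem_union, mem_insert, mem_singleton]
  refine ⟨fun hC => ?_, by rintro ((rfl | rfl) | hC); exacts [hC₀, hC₁, hblocks hC]⟩
  obtain ⟨v, hv⟩ := hP.1 C hC
  rcases (by omega : v = 0 ∨ v = 1 ∨ 2 ≤ v) with rfl | rfl | hv2
  · exact Or.inl (Or.inl (hP.eq_of_mem hC hC₀ hv h0))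
  · exact Or.inl (Or.inr (hP.eq_of_mem hC hC₁ hv h1))
  · exact Or.inr (hclass C hC v hv hv2)

theorem eq_joinedColoring_or_eq_splitColoring (hP : (hypergraph r).IsStrictColoring P)
    (hr : 3 ≤ r) : P = joinedColoring r ∨ P = splitColoring r := by
  have hPr : r < P.card := (le_card_of_isStrictColoring hP hr).lt_of_ne
    (card_ne_of_isStrictColoring hP hr).symm
  have hblocks : blocks r ⊆ P := fun C hC => by
    obtain ⟨i, hi, rfl⟩ := mem_blocks.1 hC
    exact block_mem_of_isStrictColoring hP hr hi (Or.inr hPr)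
  obtain ⟨C₀, hC₀, h0⟩ := hP.exists_mem zero_mem_verts
  obtain ⟨C₁, hC₁, h1⟩ := hP.exists_mem one_mem_verts
  obtain ⟨rfl, hC₀01, hC₁01⟩ := eq_pair_union_blocks hP hr hblocks hC₀ hC₁ h0 h1
  by_cases h01 : C₀ = C₁
  · subst h01
    have : C₀ = {0, 1} := hC₀01.antisymm (insert_subset h0 (singleton_subset_iff.2 h1))
    simp [joinedColoring, this]
  · have h1C₀ : 1 ∉ C₀ := fun h => h01 (hP.eq_of_mem hC₀ hC₁ h h1)
    have h0C₁ : 0 ∉ C₁ := fun h => h01 (hP.eq_of_mem hC₀ hC₁ h0 h)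
    have hC₀0 : C₀ = {0} := eq_singleton_iff_unique_mem.2 ⟨h0, fun z hz => by
      have := hC₀01 hz
      simp only [mem_insert, mem_singleton] at this
      exact this.resolve_right (by rintro rfl; exact h1C₀ hz)⟩
    have hC₁1 : C₁ = {1} := eq_singleton_iff_unique_mem.2 ⟨h1, fun z hz => by
      have := hC₁01 hz
      simp only [mem_insert, mem_singleton] at this
      exact this.resolve_left (by rintro rfl; exact h0C₁ hz)⟩
    simp [splitColoring, hC₀0, hC₁1]

end StrictColoring

end BlockHypergraph

theorem stmt11 (r : ℕ) (hr : 4 ≤ r) :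
    ∃ H : BiHypergraph ℕ, H.IsUniform r ∧
      H.verts.card = r * (r - 1) + 3 ∧
      H.IsOneRealization {r + 2, r + 1} := by
  have hr3 : 3 ≤ r := by omega
  have h := BiHypergraph.isOneRealization_of_forall_eq_or_eq
    (BlockHypergraph.isStrictColoring_splitColoring hr3)
    (BlockHypergraph.isStrictColoring_joinedColoring hr3)
    (by rw [BlockHypergraph.card_splitColoring hr3, BlockHypergraph.card_joinedColoring hr3]; omega)
    fun P hP => (BlockHypergraph.eq_joinedColoring_or_eq_splitColoring hP hr3).symm
  rw [BlockHypergraph.card_splitColoring hr3, BlockHypergraph.card_joinedColoring hr3] at h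
  exact ⟨BlockHypergraph.hypergraph r, BlockHypergraph.hypergraph_isUniform r,
    BlockHypergraph.card_verts r, h⟩
end

section
/- For every integer r ≥ 4, there exists an r-uniform bi-hypergraph with exactly (r − 1)^2 + 3 vertices which is a one-realization of {r + 1, r}. -/
/-!
The vertices carry labels `0, …, r`: the blocks of labels `0` and `1` are singletons, the block
`Z` of label `2` has `r` vertices and the other `r - 2` blocks have `r - 1`; the bi-edges are the
`r`-sets meeting some block twice, other than `Z`. The block partition and the partition merging
the two singletons are strict colorings.

Conversely, a strict coloring has no bi-edge inside a class and no rainbow bi-edge. The first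
leaves every class other than `Z` at most `r - 1` vertices outside `{0, 1}` (the class of `0` at
most `r - 2` when `Z` is a class), and counting the `(r - 1) ^ 2 + 1` vertices outside `{0, 1}`
gives at least `r` classes. With at least `r` classes, two equally labelled vertices in different
classes complete to a rainbow bi-edge, so every block lies inside a class; a class containing a
block of size at least `r - 1` and one more vertex would contain a bi-edge, so the only possible
merge is that of `{0}` and `{1}`.
-/

open Finset

namespace Finpartition

variable {α : Type*} [DecidableEq α] {s : Finset α}

theorem eq_of_parts_subset {P Q : Finpartition s} (h : P.parts ⊆ Q.parts) : P = Q := by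
  refine Finpartition.ext (Subset.antisymm h fun B hB => ?_)
  obtain ⟨x, hx⟩ := Q.nonempty_of_mem_parts hB
  obtain ⟨C, hC, hxC⟩ := P.exists_mem (Q.subset hB hx)
  rwa [Q.eq_of_mem_parts hB (h hC) hx hxC]

theorem exists_superset_injOn_part (P : Finpartition s) {t : Finset α} (hts : t ⊆ s)
    (ht : Set.InjOn P.part t) {m : ℕ} (htm : #t ≤ m) (hm : m ≤ #P.parts) :
    ∃ u, t ⊆ u ∧ u ⊆ s ∧ #u = m ∧ Set.InjOn P.part u := by
  induction m, htm using Nat.le_induction with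
  | base => exact ⟨t, Subset.rfl, hts, rfl, ht⟩
  | succ m _ ih =>
    obtain ⟨u, htu, hus, rfl, hu⟩ := ih (by omega)
    have hssub : u.image P.part ⊂ P.parts := by
      refine ssubset_of_subset_of_ne (fun C hC => ?_) fun h => ?_
      · obtain ⟨x, hx, rfl⟩ := mem_image.1 hC
        exact P.part_mem.2 (hus hx)
      · have := congrArg card h
        rw [card_image_of_injOn hu] at this
        omega
    obtain ⟨C, hC, hCu⟩ := exists_of_ssubset hssub
    obtain ⟨x, hx⟩ := P.nonempty_of_mem_parts hC
    have hxC : P.part x = C := P.part_eq_of_mem hC hx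
    have hxu : x ∉ u := fun h => hCu (hxC ▸ mem_image_of_mem _ h)
    refine ⟨insert x u, htu.trans (subset_insert _ _), insert_subset (P.subset hC hx) hus,
      card_insert_of_notMem hxu, ?_⟩
    rw [coe_insert, Set.injOn_insert (by simpa using hxu)]
    refine ⟨hu, fun ⟨y, hy, hyx⟩ => hCu ?_⟩
    rw [← hxC, ← hyx]
    exact mem_image_of_mem _ hy

end Finpartition

namespace BiHypergraph

variable {α : Type*} [DecidableEq α] {H : BiHypergraph α} {R : Finset (Finset α)}

namespace IsStrictColoring

def toFinpartition (hR : H.IsStrictColoring R) : Finpartition H.verts :=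
  Finpartition.ofExistsUnique R hR.2.1 hR.2.2.1 fun h => (hR.1 ∅ h).ne_empty rfl

theorem eq_of_subset {Q : Finset (Finset α)} (hR : H.IsStrictColoring R)
    (hQ : H.IsStrictColoring Q) (h : R ⊆ Q) : R = Q :=
  congrArg Finpartition.parts
    (Finpartition.eq_of_parts_subset (P := hR.toFinpartition) (Q := hQ.toFinpartition) h)

theorem not_subset_of_mem_edges (hR : H.IsStrictColoring R) {C e : Finset α} (hC : C ∈ R)
    (he : e ∈ H.edges) : ¬ e ⊆ C := by
  obtain ⟨x, hx, y, hy, C', hC', D', hD', hne, hxC', hyD'⟩ := (hR.2.2.2 e he).2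
  intro heC
  exact hne ((hR.toFinpartition.eq_of_mem_parts hC' hC hxC' (heC hx)).trans
    (hR.toFinpartition.eq_of_mem_parts hD' hC hyD' (heC hy)).symm)

theorem not_injOn_part (hR : H.IsStrictColoring R) {e : Finset α} (he : e ∈ H.edges) :
    ¬ Set.InjOn hR.toFinpartition.part e := by
  obtain ⟨C, hC, h2⟩ := (hR.2.2.2 e he).1
  obtain ⟨x, hx, y, hy, hxy⟩ := one_lt_card.1 h2
  rw [mem_inter] at hx hy
  intro hinj
  exact hxy (hinj hx.1 hy.1 ((hR.toFinpartition.part_eq_of_mem hC hx.2).trans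
    (hR.toFinpartition.part_eq_of_mem hC hy.2).symm))

end IsStrictColoring

end BiHypergraph

namespace OneRealization

/-- Vertices `0` and `1` get labels `0` and `1`, vertices `2, …, r + 1` label `2`, and the
remaining `(r - 1)(r - 2)` vertices are cut into runs of `r - 1` consecutive vertices with labels
`3, …, r`. -/
def label (r v : ℕ) : ℕ :=
  if v < 2 then v else if v < r + 2 then 2 else 3 + (v - (r + 2)) / (r - 1)

def verts (r : ℕ) : Finset ℕ := range ((r - 1) ^ 2 + 3)

def block (r j : ℕ) : Finset ℕ := (verts r).filter (label r · = j)

def edges (r : ℕ) : Finset (Finset ℕ) :=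
  ((verts r).powersetCard r).filter fun e => ¬ Set.InjOn (label r) e ∧ e ≠ block r 2

def hypergraph (r : ℕ) : BiHypergraph ℕ :=
  ⟨verts r, edges r, fun _ he => (mem_powersetCard.1 (mem_filter.1 he).1).1⟩

def blockColoring (r : ℕ) : Finset (Finset ℕ) := (range (r + 1)).image (block r)

def mergedColoring (r : ℕ) : Finset (Finset ℕ) := insert {0, 1} ((Icc 2 r).image (block r))

variable {r : ℕ}

theorem label_lt_two_iff {v : ℕ} : label r v < 2 ↔ v < 2 := by
  unfold label
  generalize (v - (r + 2)) / (r - 1) = q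
  split_ifs <;> omega

theorem two_le_label_iff {v : ℕ} : 2 ≤ label r v ↔ 2 ≤ v := by
  simpa only [not_lt] using label_lt_two_iff.not

theorem label_of_lt_two {v : ℕ} (hv : v < 2) : label r v = v := if_pos hv

theorem label_eq_two_iff {v : ℕ} : label r v = 2 ↔ 2 ≤ v ∧ v < r + 2 := by
  unfold label
  generalize (v - (r + 2)) / (r - 1) = q
  split_ifs <;> omega

theorem label_eq_add_three_iff (hr : 2 ≤ r) {v i : ℕ} :
    label r v = i + 3 ↔ r + 2 + i * (r - 1) ≤ v ∧ v < r + 2 + (i + 1) * (r - 1) := by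
  have hdiv := Nat.div_eq_iff (x := v - (r + 2)) (y := i) (by omega : 0 < r - 1)
  have : (i + 1) * (r - 1) = i * (r - 1) + (r - 1) := by ring
  unfold label
  split_ifs <;> omega

theorem mem_verts {v : ℕ} : v ∈ verts r ↔ v < (r - 1) ^ 2 + 3 := mem_range

theorem sub_one_sq_add_three_eq (hr : 2 ≤ r) : (r - 1) ^ 2 + 3 = r + 2 + (r - 2) * (r - 1) := by
  obtain ⟨s, rfl⟩ : ∃ s, r = s + 2 := ⟨r - 2, by omega⟩
  rw [show s + 2 - 1 = s + 1 by omega, show s + 2 - 2 = s by omega]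
  ring

theorem label_le (hr : 2 ≤ r) {v : ℕ} (hv : v ∈ verts r) : label r v ≤ r := by
  rw [mem_verts, sub_one_sq_add_three_eq hr] at hv
  have hq := Nat.div_lt_iff_lt_mul (x := v - (r + 2)) (y := r - 2) (by omega : 0 < r - 1)
  unfold label
  split_ifs <;> omega

theorem mem_block {v j : ℕ} : v ∈ block r j ↔ v ∈ verts r ∧ label r v = j := mem_filter

theorem block_of_lt_two {j : ℕ} (hj : j < 2) : block r j = {j} := by
  ext v
  rw [mem_block, mem_singleton, mem_verts]
  constructor
  · rintro ⟨-, rfl⟩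
    exact (label_of_lt_two (label_lt_two_iff.1 (by omega))).symm
  · rintro rfl
    exact ⟨by omega, label_of_lt_two hj⟩

theorem block_two : block r 2 = Ico 2 (r + 2) := by
  ext v
  rw [mem_block, label_eq_two_iff, mem_Ico, mem_verts]
  constructor
  · exact fun h => h.2
  · intro h
    have := Nat.le_self_pow two_ne_zero (r - 1)
    exact ⟨by omega, h⟩

theorem card_block_two : #(block r 2) = r := by
  rw [block_two, Nat.card_Ico]
  omega

theorem block_add_three (hr : 2 ≤ r) {i : ℕ} (hi : i + 3 ≤ r) :
    block r (i + 3) = Ico (r + 2 + i * (r - 1)) (r + 2 + (i + 1) * (r - 1)) := by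
  have : (i + 1) * (r - 1) ≤ (r - 2) * (r - 1) := Nat.mul_le_mul_right _ (by omega)
  ext v
  rw [mem_block, label_eq_add_three_iff hr, mem_Ico, mem_verts, sub_one_sq_add_three_eq hr]
  omega

theorem card_block (hr : 2 ≤ r) {j : ℕ} (h3 : 3 ≤ j) (hj : j ≤ r) : #(block r j) = r - 1 := by
  obtain ⟨i, rfl⟩ : ∃ i, j = i + 3 := ⟨j - 3, by omega⟩
  rw [block_add_three hr hj, Nat.card_Ico]
  have : (i + 1) * (r - 1) = i * (r - 1) + (r - 1) := by ring
  omega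

theorem mem_edges {e : Finset ℕ} :
    e ∈ edges r ↔ e ⊆ verts r ∧ #e = r ∧ ¬ Set.InjOn (label r) e ∧ e ≠ block r 2 := by
  simp only [edges, mem_filter, mem_powersetCard, and_assoc]

theorem mem_edges_of_subset {t e : Finset ℕ} (hte : t ⊆ e) (he : e ⊆ verts r) (hcard : #e = r)
    (ht : ¬ Set.InjOn (label r) t) {w : ℕ} (hw : w ∈ t) (hw2 : label r w ≠ 2) : e ∈ edges r :=
  mem_edges.2 ⟨he, hcard, fun h => ht (h.mono hte), fun h => hw2 (mem_block.1 (h ▸ hte hw)).2⟩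

theorem sub_one_le_card_block (hr : 2 ≤ r) {j : ℕ} (h2 : 2 ≤ j) (hj : j ≤ r) :
    r - 1 ≤ #(block r j) := by
  rcases h2.eq_or_lt with rfl | h3
  · rw [card_block_two]
    omega
  · rw [card_block hr h3 hj]

theorem card_block_lt (hr : 2 ≤ r) {j : ℕ} (hj : j ≤ r) (hj2 : j ≠ 2) : #(block r j) < r := by
  rcases Nat.lt_or_ge j 2 with h | h
  · rw [block_of_lt_two h, card_singleton]
    omega
  · rw [card_block hr (by omega) hj]
    omega

theorem block_nonempty (hr : 2 ≤ r) {j : ℕ} (hj : j ≤ r) : (block r j).Nonempty := by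
  rcases Nat.lt_or_ge j 2 with h | h
  · rw [block_of_lt_two h]
    exact singleton_nonempty j
  · exact card_pos.1 (by have := sub_one_le_card_block hr h hj; omega)

theorem block_inj (hr : 2 ≤ r) {j j' : ℕ} (hj : j ≤ r) (h : block r j = block r j') : j = j' := by
  obtain ⟨v, hv⟩ := block_nonempty hr hj
  exact (mem_block.1 hv).2.symm.trans (mem_block.1 (h ▸ hv)).2

theorem isStrictColoring_of_block_mem (hr : 2 ≤ r) {R : Finset (Finset ℕ)}
    (hne : ∀ C ∈ R, C.Nonempty) (hsub : ∀ C ∈ R, C ⊆ verts r)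
    (huniq : ∀ v ∈ verts r, ∃! C, C ∈ R ∧ v ∈ C)
    (hblock : ∀ j ∈ Icc 2 r, block r j ∈ R) (hsmall : ∀ C ∈ R, C ≠ block r 2 → #C < r) :
    (hypergraph r).IsStrictColoring R := by
  refine ⟨hne, hsub, huniq, fun e he => ⟨?_, ?_⟩⟩
  · obtain ⟨heV, -, hinj, -⟩ := mem_edges.1 he
    simp only [Set.InjOn, not_forall] at hinj
    obtain ⟨u, hu, v, hv, huv, hne⟩ := hinj
    have hu2 : 2 ≤ label r u := by
      by_contra h
      have hu' : u < 2 := (label_lt_two_iff (r := r)).1 (by omega)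
      have hv' : v < 2 := (label_lt_two_iff (r := r)).1 (by omega)
      rw [label_of_lt_two hu', label_of_lt_two hv'] at huv
      exact hne huv
    refine ⟨_, hblock _ (mem_Icc.2 ⟨hu2, label_le hr (heV hu)⟩), one_lt_card.2
      ⟨u, mem_inter.2 ⟨hu, mem_block.2 ⟨heV hu, rfl⟩⟩,
        v, mem_inter.2 ⟨hv, mem_block.2 ⟨heV hv, huv.symm⟩⟩, hne⟩⟩
  · obtain ⟨heV, hcard, -, heZ⟩ := mem_edges.1 he
    by_contra hmono
    push Not at hmono
    obtain ⟨x, hx⟩ := card_pos.1 (by omega : 0 < #e)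
    obtain ⟨C, ⟨hC, hxC⟩, -⟩ := huniq x (heV hx)
    have heC : e ⊆ C := fun y hy => by
      obtain ⟨D, ⟨hD, hyD⟩, -⟩ := huniq y (heV hy)
      by_cases hCD : C = D
      · exact hCD ▸ hyD
      · exact absurd hyD (hmono x hx y hy C hC D hD hCD hxC)
    have hCZ : C = block r 2 := by
      by_contra h
      have := card_le_card heC
      have := hsmall C hC h
      omega
    exact heZ (eq_of_subset_of_card_le (hCZ ▸ heC) (by rw [card_block_two, hcard]))

theorem isStrictColoring_blockColoring (hr : 2 ≤ r) :
    (hypergraph r).IsStrictColoring (blockColoring r) := by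
  have hmem : ∀ {C}, C ∈ blockColoring r ↔ ∃ j ≤ r, block r j = C := by
    simp [blockColoring]
  refine isStrictColoring_of_block_mem hr ?_ ?_ (fun v hv => ?_) ?_ ?_
  · rintro C hC
    obtain ⟨j, hj, rfl⟩ := hmem.1 hC
    exact block_nonempty hr hj
  · rintro C hC
    obtain ⟨j, -, rfl⟩ := hmem.1 hC
    exact filter_subset _ _
  · refine ⟨block r (label r v), ⟨hmem.2 ⟨_, label_le hr hv, rfl⟩, mem_block.2 ⟨hv, rfl⟩⟩, ?_⟩
    rintro C ⟨hC, hvC⟩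
    obtain ⟨j, -, rfl⟩ := hmem.1 hC
    rw [(mem_block.1 hvC).2]
  · exact fun j hj => hmem.2 ⟨j, (mem_Icc.1 hj).2, rfl⟩
  · rintro C hC hCZ
    obtain ⟨j, hj, rfl⟩ := hmem.1 hC
    exact card_block_lt hr hj (fun h => hCZ (h ▸ rfl))

theorem isStrictColoring_mergedColoring (hr : 3 ≤ r) :
    (hypergraph r).IsStrictColoring (mergedColoring r) := by
  have hmem : ∀ {C}, C ∈ mergedColoring r ↔ C = {0, 1} ∨ ∃ j, (2 ≤ j ∧ j ≤ r) ∧ block r j = C := by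
    simp [mergedColoring]
  have hpair : ({0, 1} : Finset ℕ) ⊆ verts r := by
    intro v hv
    rw [mem_verts]
    simp only [mem_insert, mem_singleton] at hv
    omega
  refine isStrictColoring_of_block_mem (by omega) ?_ ?_ (fun v hv => ?_) ?_ ?_
  · rintro C hC
    obtain rfl | ⟨j, hj, rfl⟩ := hmem.1 hC
    · exact insert_nonempty _ _
    · exact block_nonempty (by omega) hj.2
  · rintro C hC
    obtain rfl | ⟨j, -, rfl⟩ := hmem.1 hC
    · exact hpair
    · exact filter_subset _ _
  · rcases Nat.lt_or_ge v 2 with h | h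
    · refine ⟨{0, 1}, ⟨hmem.2 (Or.inl rfl), by simp only [mem_insert, mem_singleton]; omega⟩, ?_⟩
      rintro C ⟨hC, hvC⟩
      obtain rfl | ⟨j, hj, rfl⟩ := hmem.1 hC
      · rfl
      · have := label_lt_two_iff (r := r).2 h
        rw [(mem_block.1 hvC).2] at this
        omega
    · have hl : 2 ≤ label r v := two_le_label_iff.2 h
      refine ⟨block r (label r v),
        ⟨hmem.2 (Or.inr ⟨_, ⟨hl, label_le (by omega) hv⟩, rfl⟩), mem_block.2 ⟨hv, rfl⟩⟩, ?_⟩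
      rintro C ⟨hC, hvC⟩
      obtain rfl | ⟨j, -, rfl⟩ := hmem.1 hC
      · simp only [mem_insert, mem_singleton] at hvC
        omega
      · rw [(mem_block.1 hvC).2]
  · exact fun j hj => hmem.2 (Or.inr ⟨j, mem_Icc.1 hj, rfl⟩)
  · rintro C hC hCZ
    obtain rfl | ⟨j, hj, rfl⟩ := hmem.1 hC
    · exact card_le_two.trans_lt (by omega)
    · exact card_block_lt (by omega) hj.2 (fun h => hCZ (h ▸ rfl))

theorem card_blockColoring (hr : 2 ≤ r) : #(blockColoring r) = r + 1 := by
  rw [blockColoring, card_image_of_injOn, card_range]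
  exact fun j hj j' _ h => block_inj hr (Nat.lt_succ_iff.1 (mem_range.1 hj)) h

theorem card_mergedColoring (hr : 2 ≤ r) : #(mergedColoring r) = r := by
  rw [mergedColoring, card_insert_of_notMem, card_image_of_injOn, Nat.card_Icc]
  · omega
  · exact fun j hj j' _ h => block_inj hr (mem_Icc.1 hj).2 h
  · simp only [mem_image, mem_Icc, not_exists, not_and]
    rintro j ⟨hj2, -⟩ h
    have := label_lt_two_iff (r := r) (v := 0) |>.2 (by omega)
    rw [(mem_block.1 (h ▸ mem_insert_self 0 {1})).2] at this
    omega

variable {R : Finset (Finset ℕ)}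

theorem zero_notMem_block_two : 0 ∉ block r 2 := fun h => by
  simpa [label] using (mem_block.1 h).2

theorem card_lt_of_label_pair (hr : 3 ≤ r) (hR : (hypergraph r).IsStrictColoring R)
    {C : Finset ℕ} (hC : C ∈ R) {a b w : ℕ} (ha : a ∈ C) (hb : b ∈ C) (hab : a ≠ b)
    (hlab : label r a = label r b) (hw : w ∈ C) (hw2 : label r w ≠ 2) : #C < r := by
  by_contra! hCr
  have hsub : {a, b, w} ⊆ C := by simp [insert_subset_iff, ha, hb, hw]
  obtain ⟨e, hte, heC, hcard⟩ := exists_subsuperset_card_eq hsub (card_le_three.trans hr) hCr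
  have hnot : ¬ Set.InjOn (label r) ({a, b, w} : Finset ℕ) :=
    fun h => hab (h (by simp) (by simp) hlab)
  exact hR.not_subset_of_mem_edges hC
    (mem_edges_of_subset hte (heC.trans (hR.2.1 C hC)) hcard hnot (by simp) hw2) heC

theorem not_injOn_part_of_label_pair (hR : (hypergraph r).IsStrictColoring R) (hk : r ≤ #R)
    {t : Finset ℕ} (ht : t ⊆ verts r) (htr : #t ≤ r) {a b w : ℕ} (ha : a ∈ t) (hb : b ∈ t)
    (hab : a ≠ b) (hlab : label r a = label r b) (hw : w ∈ t) (hw2 : label r w ≠ 2) :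
    ¬ Set.InjOn hR.toFinpartition.part t := by
  intro hinj
  obtain ⟨e, hte, heV, hcard, he⟩ := hR.toFinpartition.exists_superset_injOn_part ht hinj htr hk
  exact hR.not_injOn_part
    (mem_edges_of_subset hte heV hcard (fun h => hab (h ha hb hlab)) hw hw2) he

theorem injOn_label_or_card_lt (hr : 3 ≤ r) (hR : (hypergraph r).IsStrictColoring R)
    {C : Finset ℕ} (hC : C ∈ R) (hCZ : C ≠ block r 2) : Set.InjOn (label r) C ∨ #C < r := by
  refine or_iff_not_imp_left.2 fun hinj => ?_
  simp only [Set.InjOn, mem_coe, not_forall] at hinj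
  obtain ⟨a, ha, b, hb, hlab, hab⟩ := hinj
  by_cases hCZ' : C ⊆ block r 2
  · exact card_block_two (r := r) ▸ card_lt_card (ssubset_of_subset_of_ne hCZ' hCZ)
  · obtain ⟨w, hwC, hwZ⟩ := not_subset.1 hCZ'
    exact card_lt_of_label_pair hr hR hC ha hb hab hlab hwC
      fun h => hwZ (mem_block.2 ⟨hR.2.1 C hC hwC, h⟩)

theorem two_le_label_of_mem_sdiff_pair {C : Finset ℕ} {v : ℕ} (hv : v ∈ C \ {0, 1}) :
    2 ≤ label r v := by
  simp only [mem_sdiff, mem_insert, mem_singleton, not_or] at hv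
  exact two_le_label_iff.2 (by omega)

theorem card_sdiff_pair_le (hr : 3 ≤ r) (hR : (hypergraph r).IsStrictColoring R)
    {C : Finset ℕ} (hC : C ∈ R) (hCZ : C ≠ block r 2) : #(C \ {0, 1}) ≤ r - 1 := by
  rcases injOn_label_or_card_lt hr hR hC hCZ with hinj | hlt
  · have hmaps : Set.MapsTo (label r) ↑(C \ {0, 1}) ↑(Icc 2 r) := fun v hv =>
      mem_Icc.2 ⟨two_le_label_of_mem_sdiff_pair hv,
        label_le (by omega) (hR.2.1 C hC (mem_sdiff.1 hv).1)⟩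
    have := card_le_card_of_injOn _ hmaps (hinj.mono (coe_subset.2 sdiff_subset))
    rwa [Nat.card_Icc] at this
  · have := card_le_card (sdiff_subset (s := C) (t := {0, 1}))
    omega

theorem card_sdiff_pair_le_of_disjoint (hr : 3 ≤ r) (hR : (hypergraph r).IsStrictColoring R)
    {C : Finset ℕ} (hC : C ∈ R) (h0 : 0 ∈ C) (hdisj : Disjoint C (block r 2)) :
    #(C \ {0, 1}) ≤ r - 2 := by
  have hCZ : C ≠ block r 2 := fun h => zero_notMem_block_two (h ▸ h0)
  rcases injOn_label_or_card_lt hr hR hC hCZ with hinj | hlt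
  · have hmaps : Set.MapsTo (label r) ↑(C \ {0, 1}) ↑(Icc 3 r) := fun v hv => by
      have hvC := (mem_sdiff.1 hv).1
      have h2 := two_le_label_of_mem_sdiff_pair (r := r) hv
      have hne : label r v ≠ 2 := fun h =>
        disjoint_left.1 hdisj hvC (mem_block.2 ⟨hR.2.1 C hC hvC, h⟩)
      exact mem_Icc.2 ⟨by omega, label_le (by omega) (hR.2.1 C hC hvC)⟩
    have := card_le_card_of_injOn _ hmaps (hinj.mono (coe_subset.2 sdiff_subset))
    rwa [Nat.card_Icc] at this
  · have : C \ {0, 1} ⊆ C.erase 0 := fun v hv => by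
      simp only [mem_sdiff, mem_insert, mem_singleton, not_or] at hv
      exact mem_erase.2 ⟨hv.2.1, hv.1⟩
    have := card_le_card this
    rw [card_erase_of_mem h0] at this
    omega

theorem sum_card_sdiff_pair (hR : (hypergraph r).IsStrictColoring R) :
    ∑ C ∈ R, #(C \ {0, 1}) = (r - 1) ^ 2 + 1 := by
  have hW : verts r \ {0, 1} ⊆ verts r := sdiff_subset
  have hsum : ∑ C ∈ R, #(C ⊓ (verts r \ {0, 1})) = #(verts r \ {0, 1}) :=
    (hR.toFinpartition.sum_restrict hW (fun p => #p) card_empty).symm.trans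
      (hR.toFinpartition.restrict hW).sum_card_parts
  have hpair : ({0, 1} : Finset ℕ) ⊆ verts r := by
    intro v hv
    rw [mem_verts]
    simp only [mem_insert, mem_singleton] at hv
    omega
  calc ∑ C ∈ R, #(C \ {0, 1}) = ∑ C ∈ R, #(C ⊓ (verts r \ {0, 1})) :=
        sum_congr rfl fun C hC => by
          have hCV : C ⊆ verts r := hR.2.1 C hC
          rw [inf_eq_inter, ← inter_sdiff_assoc, inter_eq_left.2 hCV]
    _ = #(verts r \ {0, 1}) := hsum
    _ = (r - 1) ^ 2 + 1 := by
      rw [card_sdiff_of_subset hpair, verts, card_range, card_pair zero_ne_one]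
      omega

theorem le_card_of_isStrictColoring (hr : 4 ≤ r) (hR : (hypergraph r).IsStrictColoring R) :
    r ≤ #R := by
  suffices h : ∑ C ∈ R, #(C \ {0, 1}) ≤ #R * (r - 1) by
    rw [sum_card_sdiff_pair hR] at h
    by_contra! hlt
    have : #R * (r - 1) ≤ (r - 1) * (r - 1) := Nat.mul_le_mul_right _ (by omega)
    nlinarith
  by_cases hZ : block r 2 ∈ R
  · -- `block r 2` has one vertex too many; the class of `0` misses it and has one too few
    set C₀ := hR.toFinpartition.part 0
    have hC₀ : C₀ ∈ R := hR.toFinpartition.part_mem.2 (by simp [hypergraph, mem_verts])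
    have h0 : 0 ∈ C₀ := hR.toFinpartition.mem_part_self.2 (by simp [hypergraph, mem_verts])
    have hC₀Z : C₀ ≠ block r 2 := fun h => zero_notMem_block_two (h ▸ h0)
    have hdisj : Disjoint C₀ (block r 2) := hR.toFinpartition.disjoint hC₀ hZ hC₀Z
    have hC₀' : C₀ ∈ R.erase (block r 2) := mem_erase.2 ⟨hC₀Z, hC₀⟩
    have hrest := sum_le_card_nsmul ((R.erase (block r 2)).erase C₀) (fun C => #(C \ {0, 1}))
      (r - 1) fun C hC => card_sdiff_pair_le (by omega) hR
        (mem_of_mem_erase (mem_of_mem_erase hC)) (ne_of_mem_erase (mem_of_mem_erase hC))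
    have hZcard : #(block r 2 \ {0, 1}) ≤ r := by
      have := card_le_card (sdiff_subset (s := block r 2) (t := {0, 1}))
      rwa [card_block_two] at this
    have hC₀card := card_sdiff_pair_le_of_disjoint (by omega) hR hC₀ h0 hdisj
    rw [card_erase_of_mem hC₀', card_erase_of_mem hZ, smul_eq_mul] at hrest
    have htwo : #R * (r - 1) = (#R - 1 - 1) * (r - 1) + 2 * (r - 1) := by
      have := card_le_card (insert_subset hZ (singleton_subset_iff.2 hC₀))
      rw [card_pair (Ne.symm hC₀Z)] at this
      rw [← add_mul]
      congr 1
      omega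
    rw [← add_sum_erase R _ hZ, ← add_sum_erase _ _ hC₀', htwo]
    omega
  · exact (sum_le_card_nsmul R _ (r - 1) fun C hC =>
      card_sdiff_pair_le (by omega) hR hC (ne_of_mem_of_not_mem hC hZ)).trans_eq (smul_eq_mul _ _)

theorem part_eq_of_label_eq_of_ne_two (hr : 2 ≤ r) (hR : (hypergraph r).IsStrictColoring R)
    (hk : r ≤ #R) {u v : ℕ} (hu : u ∈ verts r) (hv : v ∈ verts r) (huv : label r u = label r v)
    (h2 : label r u ≠ 2) : hR.toFinpartition.part u = hR.toFinpartition.part v := by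
  by_contra hne
  have hne' : u ≠ v := fun h => hne (h ▸ rfl)
  exact not_injOn_part_of_label_pair hR hk (t := {u, v}) (insert_subset hu
    (singleton_subset_iff.2 hv)) (card_le_two.trans hr) (mem_insert_self _ _) (by simp) hne' huv
    (mem_insert_self _ _) h2
    (by simp [Set.injOn_iff_pairwise_ne, Set.pairwise_insert, hne, Ne.symm hne])

theorem part_eq_of_label_eq (hr : 4 ≤ r) (hR : (hypergraph r).IsStrictColoring R) (hk : r ≤ #R)
    {u v : ℕ} (hu : u ∈ verts r) (hv : v ∈ verts r) (huv : label r u = label r v) :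
    hR.toFinpartition.part u = hR.toFinpartition.part v := by
  set F := hR.toFinpartition
  by_contra hne
  have hu2 : label r u = 2 := by
    by_contra h
    exact hne (part_eq_of_label_eq_of_ne_two (by omega) hR hk hu hv huv h)
  obtain ⟨a, ha, b, hb, hab⟩ := one_lt_card.1
    (by have := card_block (r := r) (by omega) le_rfl (by omega); omega : 1 < #(block r 3))
  have hblock : block r 3 ⊆ F.part a := fun c hc => by
    rw [← part_eq_of_label_eq_of_ne_two (by omega) hR hk (mem_block.1 hc).1 (mem_block.1 ha).1
      ((mem_block.1 hc).2.trans (mem_block.1 ha).2.symm) (by rw [(mem_block.1 hc).2]; omega)]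
    exact F.mem_part_self.2 (mem_block.1 hc).1
  -- a class containing `block r 3` and a vertex of label `2` would contain a bi-edge
  have hsep : ∀ x ∈ verts r, label r x = 2 → F.part a ≠ F.part x := by
    intro x hx hx2 hax
    have hxa : x ∈ F.part a := hax ▸ F.mem_part_self.2 hx
    have hx3 : x ∉ block r 3 := fun h => by rw [(mem_block.1 h).2] at hx2; omega
    have hcard := card_le_card (insert_subset hxa hblock)
    rw [card_insert_of_notMem hx3, card_block (by omega) le_rfl (by omega)] at hcard
    have hlt := card_lt_of_label_pair (by omega) hR (F.part_mem.2 (mem_block.1 ha).1)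
      (hblock ha) (hblock hb) hab ((mem_block.1 ha).2.trans (mem_block.1 hb).2.symm)
      (hblock ha) (by rw [(mem_block.1 ha).2]; omega)
    omega
  have hau := hsep u hu hu2
  have hav := hsep v hv (huv ▸ hu2)
  exact not_injOn_part_of_label_pair hR hk (t := {u, v, a}) (a := u) (b := v) (w := a)
    (by simp [insert_subset_iff, hu, hv, (mem_block.1 ha).1]) (card_le_three.trans (by omega))
    (by simp) (by simp) (fun h => hne (h ▸ rfl)) huv (by simp) (by rw [(mem_block.1 ha).2]; omega)
    (show Set.InjOn F.part ({u, v, a} : Finset ℕ) by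
      simp [Set.injOn_iff_pairwise_ne, Set.pairwise_insert, hne, Ne.symm hne, hau, Ne.symm hau,
        hav, Ne.symm hav])

theorem eq_block_of_mem (hr : 4 ≤ r) (hR : (hypergraph r).IsStrictColoring R) (hk : r ≤ #R)
    {C : Finset ℕ} (hC : C ∈ R) {x : ℕ} (hx : x ∈ C) (hx2 : 2 ≤ label r x) :
    C = block r (label r x) := by
  set F := hR.toFinpartition
  have hxV : x ∈ verts r := hR.2.1 C hC hx
  have hsub : block r (label r x) ⊆ C := fun y hy => by
    rw [← F.part_eq_of_mem hC hx, ← part_eq_of_label_eq hr hR hk (mem_block.1 hy).1 hxV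
      (mem_block.1 hy).2]
    exact F.mem_part_self.2 (mem_block.1 hy).1
  refine Subset.antisymm (fun y hy => ?_) hsub
  by_contra hyB
  have hly : label r y ≠ label r x := fun h => hyB (mem_block.2 ⟨hR.2.1 C hC hy, h⟩)
  have hB := sub_one_le_card_block (by omega) hx2 (label_le (by omega) hxV)
  have hcard := card_le_card (insert_subset hy hsub)
  rw [card_insert_of_notMem hyB] at hcard
  obtain ⟨a, ha, b, hb, hab⟩ := one_lt_card.1 (by omega : 1 < #(block r (label r x)))
  have hlab : label r a = label r b := (mem_block.1 ha).2.trans (mem_block.1 hb).2.symm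
  -- a bi-edge inside `C` needs a vertex of label other than `2`: `a` or else `y`
  obtain ⟨w, hw, hw2⟩ : ∃ w ∈ C, label r w ≠ 2 := by
    by_cases h2 : label r x = 2
    · exact ⟨y, hy, h2 ▸ hly⟩
    · exact ⟨a, hsub ha, (mem_block.1 ha).2 ▸ h2⟩
  have := card_lt_of_label_pair (by omega) hR hC (hsub ha) (hsub hb) hab hlab hw hw2
  omega

theorem mem_insert_pair_blockColoring (hr : 4 ≤ r) (hR : (hypergraph r).IsStrictColoring R)
    (hk : r ≤ #R) {C : Finset ℕ} (hC : C ∈ R) : C ∈ insert {0, 1} (blockColoring r) := by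
  by_cases h : ∃ x ∈ C, 2 ≤ label r x
  · obtain ⟨x, hx, hx2⟩ := h
    refine mem_insert_of_mem (mem_image.2 ⟨label r x, mem_range.2 ?_,
      (eq_block_of_mem hr hR hk hC hx hx2).symm⟩)
    have := label_le (by omega) (hR.2.1 C hC hx)
    omega
  · push Not at h
    have hC01 : C ⊆ {0, 1} := fun x hx => by
      have := (label_lt_two_iff (r := r) (v := x)).1 (h x hx)
      simp only [mem_insert, mem_singleton]
      omega
    have hcard := card_le_card hC01
    rw [card_pair zero_ne_one] at hcard
    rcases Nat.lt_or_ge #C 2 with h1 | h2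
    · obtain ⟨x, rfl⟩ := card_eq_one.1 (show #C = 1 by have := card_pos.2 (hR.1 C hC); omega)
      have hx : x < 2 := by
        have := hC01 (mem_singleton_self x)
        simp only [mem_insert, mem_singleton] at this
        omega
      exact mem_insert_of_mem (mem_image.2 ⟨x, mem_range.2 (by omega), block_of_lt_two hx⟩)
    · exact mem_insert.2 (Or.inl (eq_of_subset_of_card_le hC01 (by simpa using h2)))

theorem eq_blockColoring_or_eq_mergedColoring (hr : 4 ≤ r)
    (hR : (hypergraph r).IsStrictColoring R) : R = blockColoring r ∨ R = mergedColoring r := by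
  have hmem := fun C (hC : C ∈ R) =>
    mem_insert_pair_blockColoring hr hR (le_card_of_isStrictColoring hr hR) hC
  by_cases h01 : {0, 1} ∈ R
  · refine Or.inr (hR.eq_of_subset (isStrictColoring_mergedColoring (by omega)) fun C hC => ?_)
    rcases mem_insert.1 (hmem C hC) with rfl | hCb
    · exact mem_insert_self _ _
    · obtain ⟨j, hj, rfl⟩ := mem_image.1 hCb
      have hj2 : 2 ≤ j := by
        by_contra h
        have hjR : ({j} : Finset ℕ) ∈ R := block_of_lt_two (r := r) (j := j) (by omega) ▸ hC
        have hj01 : j ∈ ({0, 1} : Finset ℕ) := by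
          simp only [mem_insert, mem_singleton]
          omega
        have := congrArg card
          (hR.toFinpartition.eq_of_mem_parts hjR h01 (mem_singleton_self j) hj01)
        rw [card_singleton, card_pair zero_ne_one] at this
        omega
      have hjr : j ≤ r := Nat.lt_succ_iff.1 (mem_range.1 hj)
      exact mem_insert_of_mem (mem_image.2 ⟨j, mem_Icc.2 ⟨hj2, hjr⟩, rfl⟩)
  · exact Or.inl (hR.eq_of_subset (isStrictColoring_blockColoring (by omega)) fun C hC =>
      (mem_insert.1 (hmem C hC)).resolve_left fun h => h01 (h ▸ hC))

end OneRealization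

open BiHypergraph OneRealization in
theorem stmt15 (r : ℕ) (hr : 4 ≤ r) :
    ∃ H : BiHypergraph ℕ, H.IsUniform r ∧
      H.verts.card = (r - 1) ^ 2 + 3 ∧
      H.IsOneRealization {r + 1, r} := by
  have hclass := fun R (hR : (hypergraph r).IsStrictColoring R) =>
    eq_blockColoring_or_eq_mergedColoring hr hR
  have hP := card_blockColoring (r := r) (by omega)
  have hQ := card_mergedColoring (r := r) (by omega)
  refine ⟨hypergraph r, fun e he => (mem_edges.1 he).2.1, card_range _, ?_, ?_⟩
  · ext k
    simp only [feasibleSet, Set.mem_ofPred_eq, coe_insert, coe_singleton, Set.mem_insert_iff,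
      Set.mem_singleton_iff]
    constructor
    · rintro ⟨R, hR, rfl⟩
      rcases hclass R hR with rfl | rfl <;> omega
    · rintro (rfl | rfl)
      exacts [⟨_, isStrictColoring_blockColoring (by omega), hP⟩,
        ⟨_, isStrictColoring_mergedColoring (by omega), hQ⟩]
  · intro P Q hP' hQ' hPQ
    rcases hclass P hP' with rfl | rfl <;> rcases hclass Q hQ' with rfl | rfl
    all_goals first | rfl | omega
end

section
/- For every integer r ≥ 6, there exists an r-uniform bi-hypergraph with exactly r(r − 1) − 1 vertices which is a one-realization of {r + 1, r, r − 1}. -/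
/-!
Lay the vertices `0, …, r(r-1)-2` out in `r - 1` rows `v / r`. The units are the rows from the
third one on, plus the two `(r-1)`-sets obtained from the first two rows by deleting `0` and `r`
and exchanging `r - 1` with `2r - 1`. The bi-edges are the `r`-sets that meet two rows and contain
two vertices of one unit. The rows, the units with `{0}` and `{r}`, and the units with `{0, r}`
are then strict colorings with `r - 1`, `r + 1` and `r` classes.

Conversely, no class of a strict coloring contains a bi-edge, so a class with at least `r`
vertices is a row or meets every unit at most once; classes therefore have at most `r + 1`
vertices, and there are at least `r - 1` of them. With at least `r` classes no bi-edge is rainbow,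
so two vertices of a unit share a class (else they, a vertex outside their classes and their row,
and further vertices of other classes form a rainbow bi-edge), and a class containing a unit is
that unit, except for `0` and `r`. With `r - 1` classes, counting vertices shows that at most
three classes are not rows; a class meeting every unit at most once misses the units inside two
row classes, so it has fewer than `r` vertices, and counting again leaves only rows.
-/
open Finset

namespace Finpartition

variable {α β : Type*} [DecidableEq α] [DecidableEq β] {s t : Finset α}

theorem sum_card_inter (P : Finpartition s) (ht : t ⊆ s) : ∑ B ∈ P.parts, #(B ∩ t) = #t := by
  rw [← (P.restrict ht).sum_card_parts, P.sum_restrict ht card card_empty]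
  rfl

theorem exists_injOn_part_superset (P : Finpartition s) (hts : t ⊆ s) (ht : Set.InjOn P.part t)
    {k : ℕ} (htk : #t ≤ k) (hk : k ≤ #P.parts) :
    ∃ u, t ⊆ u ∧ u ⊆ s ∧ #u = k ∧ Set.InjOn P.part u := by
  induction k with
  | zero => exact ⟨t, subset_rfl, hts, by omega, ht⟩
  | succ k ih =>
    obtain htk | htk := htk.eq_or_lt
    · exact ⟨t, subset_rfl, hts, htk, ht⟩
    obtain ⟨u, htu, hus, rfl, hu⟩ := ih (by omega) (by omega)
    obtain ⟨p, hp, hpu⟩ := exists_mem_notMem_of_card_lt_card (s := u.image P.part)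
      (t := P.parts) (by rw [card_image_of_injOn hu]; omega)
    obtain ⟨a, ha⟩ := P.nonempty_of_mem_parts hp
    have hpa : P.part a = p := P.part_eq_of_mem hp ha
    have hau : a ∉ u := fun hau => hpu (hpa ▸ mem_image_of_mem _ hau)
    refine ⟨insert a u, htu.trans (subset_insert _ _), insert_subset (P.subset hp ha) hus,
      card_insert_of_notMem hau, ?_⟩
    rw [coe_insert, Set.injOn_insert (by exact_mod_cast hau), hpa]
    exact ⟨hu, fun h => hpu (by simpa using h)⟩

theorem part_eq_of_part_eq_part_iff {P Q : Finpartition s}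
    (h : ∀ x ∈ s, ∀ y ∈ s, P.part x = P.part y ↔ Q.part x = Q.part y) (x : α) :
    P.part x = Q.part x := by
  by_cases hx : x ∈ s
  · ext y
    by_cases hy : y ∈ s
    · rw [P.mem_part_iff_part_eq_part hy hx, Q.mem_part_iff_part_eq_part hy hx, h y hy x hx]
    · exact iff_of_false (fun hy' => hy (P.part_subset x hy')) (fun hy' => hy (Q.part_subset x hy'))
  · rw [P.part_eq_empty.2 hx, Q.part_eq_empty.2 hx]

theorem ext_of_part_eq_part_iff {P Q : Finpartition s}
    (h : ∀ x ∈ s, ∀ y ∈ s, P.part x = P.part y ↔ Q.part x = Q.part y) : P = Q := by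
  have hPQ := part_eq_of_part_eq_part_iff h
  ext B
  constructor
  · intro hB
    obtain ⟨x, hx, rfl⟩ := P.part_surjOn hB
    rw [hPQ]; exact Q.part_mem.2 hx
  · intro hB
    obtain ⟨x, hx, rfl⟩ := Q.part_surjOn hB
    rw [← hPQ]; exact P.part_mem.2 hx

def fibers (s : Finset α) (f : α → β) : Finpartition s :=
  letI : DecidableRel (Setoid.ker f) := fun a b => decEq (f a) (f b)
  ofSetSetoid (Setoid.ker f) s

theorem mem_part_fibers {f : α → β} {a b : α} :
    b ∈ (fibers s f).part a ↔ a ∈ s ∧ b ∈ s ∧ f a = f b :=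
  mem_part_ofSetSetoid_iff_rel s

theorem part_fibers_eq_part_iff {f : α → β} {a b : α} (ha : a ∈ s) (hb : b ∈ s) :
    (fibers s f).part a = (fibers s f).part b ↔ f a = f b := by
  rw [← mem_part_iff_part_eq_part _ ha hb, mem_part_fibers]
  exact ⟨fun h => h.2.2.symm, fun h => ⟨hb, ha, h.symm⟩⟩

theorem card_parts_fibers (f : α → β) : #(fibers s f).parts = #(s.image f) := by
  have : (fibers s f).parts = (s.image f).image fun i => {b ∈ s | i = f b} := by
    rw [image_image]; exact ofSetSetoid_parts _ _
  rw [this, card_image_of_injOn]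
  intro i hi j hj hij
  obtain ⟨a, ha, rfl⟩ := mem_image.1 (mem_coe.1 hi)
  have : a ∈ {b ∈ s | j = f b} := by
    simp only at hij; exact hij ▸ mem_filter.2 ⟨ha, rfl⟩
  exact (mem_filter.1 this).2.symm

end Finpartition

namespace BiHypergraph

variable {α β : Type*} [DecidableEq α] [DecidableEq β] {H : BiHypergraph α}

theorem IsStrictColoring.exists_finpartition {P : Finset (Finset α)} (hP : H.IsStrictColoring P) :
    ∃ Q : Finpartition H.verts, Q.parts = P :=
  ⟨.ofExistsUnique P hP.2.1 hP.2.2.1 fun h => not_nonempty_empty (hP.1 ∅ h), rfl⟩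

theorem isStrictColoring_parts_iff (Q : Finpartition H.verts) :
    H.IsStrictColoring Q.parts ↔ ∀ e ∈ H.edges,
      (∃ x ∈ e, ∃ y ∈ e, x ≠ y ∧ Q.part x = Q.part y) ∧ ∃ x ∈ e, ∃ y ∈ e, Q.part x ≠ Q.part y := by
  have hpart : ∀ e ∈ H.edges, ∀ x ∈ e, x ∈ Q.part x := fun e he x hx =>
    Q.mem_part (H.edges_sub e he hx)
  refine ⟨fun hQ e he => ⟨?_, ?_⟩, fun h => ⟨fun _ => Q.nonempty_of_mem_parts, fun _ => Q.subset,
    fun _ => Q.existsUnique_mem, fun e he => ⟨?_, ?_⟩⟩⟩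
  · obtain ⟨C, hC, h2⟩ := (hQ.2.2.2 e he).1
    obtain ⟨x, hx, y, hy, hxy⟩ := one_lt_card.1 h2
    rw [mem_inter] at hx hy
    exact ⟨x, hx.1, y, hy.1, hxy, (Q.part_eq_of_mem hC hx.2).trans (Q.part_eq_of_mem hC hy.2).symm⟩
  · obtain ⟨x, hx, y, hy, C, hC, D, hD, hCD, hxC, hyD⟩ := (hQ.2.2.2 e he).2
    exact ⟨x, hx, y, hy, by rwa [Q.part_eq_of_mem hC hxC, Q.part_eq_of_mem hD hyD]⟩
  · obtain ⟨x, hx, y, hy, hxy, hp⟩ := (h e he).1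
    exact ⟨Q.part x, Q.part_mem.2 (H.edges_sub e he hx), one_lt_card.2
      ⟨x, mem_inter.2 ⟨hx, hpart e he x hx⟩, y, mem_inter.2 ⟨hy, hp ▸ hpart e he y hy⟩, hxy⟩⟩
  · obtain ⟨x, hx, y, hy, hp⟩ := (h e he).2
    exact ⟨x, hx, y, hy, _, Q.part_mem.2 (H.edges_sub e he hx), _,
      Q.part_mem.2 (H.edges_sub e he hy), hp, hpart e he x hx, hpart e he y hy⟩

theorem IsStrictColoring.not_injOn_part_s16 {Q : Finpartition H.verts}
    (hQ : H.IsStrictColoring Q.parts) {e : Finset α} (he : e ∈ H.edges) : ¬ Set.InjOn Q.part e := by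
  obtain ⟨x, hx, y, hy, hxy, hp⟩ := ((isStrictColoring_parts_iff Q).1 hQ e he).1
  exact fun hinj => hxy (hinj hx hy hp)

theorem IsStrictColoring.not_subset_of_mem_parts {Q : Finpartition H.verts}
    (hQ : H.IsStrictColoring Q.parts) {e B : Finset α} (he : e ∈ H.edges) (hB : B ∈ Q.parts) :
    ¬ e ⊆ B := by
  obtain ⟨x, hx, y, hy, hp⟩ := ((isStrictColoring_parts_iff Q).1 hQ e he).2
  exact fun heB => hp ((Q.part_eq_of_mem hB (heB hx)).trans (Q.part_eq_of_mem hB (heB hy)).symm)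

theorem isStrictColoring_fibers_iff (f : α → β) :
    H.IsStrictColoring (Finpartition.fibers H.verts f).parts ↔ ∀ e ∈ H.edges,
      (∃ x ∈ e, ∃ y ∈ e, x ≠ y ∧ f x = f y) ∧ ∃ x ∈ e, ∃ y ∈ e, f x ≠ f y := by
  rw [isStrictColoring_parts_iff]
  refine forall₂_congr fun e he => ?_
  have key : ∀ x ∈ e, ∀ y ∈ e,
      (Finpartition.fibers H.verts f).part x = (Finpartition.fibers H.verts f).part y ↔ f x = f y :=
    fun x hx y hy =>
      Finpartition.part_fibers_eq_part_iff (H.edges_sub e he hx) (H.edges_sub e he hy)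
  exact and_congr
    (exists_congr fun x => and_congr_right fun hx => exists_congr fun y =>
      and_congr_right fun hy => and_congr_right' (key x hx y hy))
    (exists_congr fun x => and_congr_right fun hx => exists_congr fun y =>
      and_congr_right fun hy => not_congr (key x hx y hy))

end BiHypergraph

namespace ConsecutiveRealization

open BiHypergraph Finpartition

variable {r : ℕ}

def vertices (r : ℕ) : Finset ℕ := range (r * (r - 1) - 1)

/-- The colour of `v` in the strict `(r + 1)`-coloring: away from the first two rows it is the row
`v / r`; `0` and `r` are singleton classes, and `r - 1` and `2 * r - 1` trade rows. -/
def unitColor (r v : ℕ) : ℕ :=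
  if v = 0 then r - 1 else if v = r then r else
    if v = r - 1 then 1 else if v = 2 * r - 1 then 0 else v / r

/-- Merges the singleton classes `{0}` and `{r}` of `unitColor`. -/
def pairColor (r v : ℕ) : ℕ := min (unitColor r v) (r - 1)

def rowPartition (r : ℕ) : Finpartition (vertices r) := fibers _ (· / r)

def unitPartition (r : ℕ) : Finpartition (vertices r) := fibers _ (unitColor r)

def pairPartition (r : ℕ) : Finpartition (vertices r) := fibers _ (pairColor r)

def hypergraph (r : ℕ) : BiHypergraph ℕ where
  verts := vertices r
  edges := {e ∈ (vertices r).powersetCard r | (∃ x ∈ e, ∃ y ∈ e, x / r ≠ y / r) ∧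
    ∃ x ∈ e, ∃ y ∈ e, x ≠ y ∧ unitColor r x = unitColor r y}
  edges_sub _ he := (mem_powersetCard.1 (mem_filter.1 he).1).1

theorem mem_edges {e : Finset ℕ} :
    e ∈ (hypergraph r).edges ↔ e ⊆ vertices r ∧ #e = r ∧ (∃ x ∈ e, ∃ y ∈ e, x / r ≠ y / r) ∧
      ∃ x ∈ e, ∃ y ∈ e, x ≠ y ∧ unitColor r x = unitColor r y := by
  simp only [hypergraph, mem_filter, mem_powersetCard, and_assoc]

theorem card_vertices : #(vertices r) = r * (r - 1) - 1 := card_range _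

theorem div_lt_of_mem_vertices {v : ℕ} (hv : v ∈ vertices r) : v / r < r - 1 := by
  have hv : v < r * (r - 1) - 1 := mem_range.1 hv
  have hr : 0 < r := Nat.pos_of_ne_zero (by rintro rfl; simp at hv)
  rw [Nat.div_lt_iff_lt_mul hr, mul_comm]
  omega

theorem mul_add_mem_vertices {j k : ℕ} (hj : j < r - 1) (hk : k < r - 1) :
    r * j + k ∈ vertices r := by
  have : r * j + r ≤ r * (r - 1) := by
    rw [← Nat.mul_succ]; exact Nat.mul_le_mul_left r hj
  exact mem_range.2 (by omega)

theorem mul_add_div_of_lt {j k : ℕ} (hk : k < r) : (r * j + k) / r = j := by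
  rw [Nat.mul_add_div (by omega), Nat.div_eq_of_lt hk, add_zero]

theorem mem_vertices_of_lt {v : ℕ} (hr : 4 ≤ r) (hv : v < 2 * r) : v ∈ vertices r := by
  have : r * 3 ≤ r * (r - 1) := Nat.mul_le_mul_left r (by omega)
  exact mem_range.2 (by omega)

theorem card_le_of_mem_rowPartition {C : Finset ℕ} (hC : C ∈ (rowPartition r).parts) :
    #C ≤ r := by
  obtain ⟨x, -, rfl⟩ := (rowPartition r).part_surjOn hC
  calc #((rowPartition r).part x)
      ≤ #((range r).image (r * (x / r) + ·)) := by
        refine card_le_card fun v hv => mem_image.2 ⟨v % r, ?_, ?_⟩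
        · obtain ⟨-, hv, -⟩ := mem_part_fibers.1 hv
          exact mem_range.2
            (Nat.mod_lt _ (Nat.pos_of_ne_zero (by rintro rfl; simp [vertices] at hv)))
        · rw [(mem_part_fibers.1 hv).2.2]; exact Nat.div_add_mod v r
    _ ≤ r := card_image_le.trans (card_range r).le

theorem le_card_of_mem_rowPartition {C : Finset ℕ} (hC : C ∈ (rowPartition r).parts) :
    r - 1 ≤ #C := by
  obtain ⟨x, hx, rfl⟩ := (rowPartition r).part_surjOn hC
  have hj := div_lt_of_mem_vertices hx
  calc r - 1 = #((range (r - 1)).image (r * (x / r) + ·)) := by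
        rw [card_image_of_injective _ (add_right_injective _), card_range]
    _ ≤ _ := card_le_card fun v hv => by
        obtain ⟨k, hk, rfl⟩ := mem_image.1 hv
        have hk := mem_range.1 hk
        exact mem_part_fibers.2 ⟨hx, mul_add_mem_vertices hj hk,
          (mul_add_div_of_lt (by omega)).symm⟩

theorem unitColor_of_ne {v : ℕ} (h₀ : v ≠ 0) (hᵣ : v ≠ r) (h₁ : v ≠ r - 1) (h₂ : v ≠ 2 * r - 1) :
    unitColor r v = v / r := by
  simp [unitColor, *]

theorem unitColor_eq_div {v : ℕ} (hv : 2 ≤ v / r) : unitColor r v = v / r := by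
  have hr : 0 < r := Nat.pos_of_ne_zero (by rintro rfl; simp at hv)
  have := (Nat.le_div_iff_mul_le hr).1 hv
  exact unitColor_of_ne (by omega) (by omega) (by omega) (by omega)

theorem div_eq_unitColor {v : ℕ} (h2 : 2 ≤ unitColor r v) (hlt : unitColor r v < r - 1) :
    v / r = unitColor r v := by
  unfold unitColor at *
  split_ifs at * <;> omega

theorem unitColor_lt {v : ℕ} (hr : 3 ≤ r) (hv : v ∈ vertices r) (h0 : v ≠ 0) (hvr : v ≠ r) :
    unitColor r v < r - 1 := by
  have := div_lt_of_mem_vertices hv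
  unfold unitColor
  split_ifs <;> omega

theorem unitColor_zero : unitColor r 0 = r - 1 := if_pos rfl

theorem unitColor_self (hr : r ≠ 0) : unitColor r r = r := by simp [unitColor, hr]

theorem eq_of_unitColor_eq {v w : ℕ} (hr : 3 ≤ r) (hv : v ∈ vertices r) (hw : w = 0 ∨ w = r)
    (h : unitColor r v = unitColor r w) : v = w := by
  have h₀ : unitColor r 0 = r - 1 := unitColor_zero
  have hᵣ : unitColor r r = r := unitColor_self (by omega)
  by_cases hv' : v = 0 ∨ v = r
  · rcases hv' with rfl | rfl <;> rcases hw with rfl | rfl <;> omega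
  · have := unitColor_lt hr hv (by tauto) (by tauto)
    rcases hw with rfl | rfl <;> omega

theorem unitColor_eq_zero_iff {v : ℕ} (hr : 3 ≤ r) :
    unitColor r v = 0 ↔ v = 2 * r - 1 ∨ 1 ≤ v ∧ v < r - 1 := by
  have := @Nat.div_eq_zero_iff v r
  unfold unitColor
  split_ifs <;> grind

theorem unitColor_eq_one_iff {v : ℕ} (hr : 3 ≤ r) :
    unitColor r v = 1 ↔ v = r - 1 ∨ r + 1 ≤ v ∧ v < 2 * r - 1 := by
  have := Nat.div_eq_iff (x := v) (y := 1) (by omega : 0 < r)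
  unfold unitColor
  split_ifs <;> grind

theorem pairColor_eq_iff (hr : 3 ≤ r) {x y : ℕ} (hx : x ∈ vertices r) (hy : y ∈ vertices r) :
    pairColor r x = pairColor r y ↔
      unitColor r x = unitColor r y ∨ (x = 0 ∨ x = r) ∧ (y = 0 ∨ y = r) := by
  have key : ∀ v ∈ vertices r, (v = 0 ∨ v = r) ↔ r - 1 ≤ unitColor r v := by
    intro v hv
    refine ⟨?_, fun h => ?_⟩
    · rintro (rfl | rfl)
      · rw [unitColor_zero]
      · rw [unitColor_self (by omega)]; omega
    · by_contra h'
      have := unitColor_lt hr hv (by tauto) (by tauto)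
      omega
  rw [key x hx, key y hy]
  unfold pairColor
  omega

theorem unitPart_eq_rowPart_or {y : ℕ} (hr : 4 ≤ r) (hy : y ∈ vertices r) (hy0 : y ≠ 0)
    (hyr : y ≠ r) :
    (unitPartition r).part y = (rowPartition r).part y ∨
      #((unitPartition r).part y) = r - 1 ∧
        ∃ a ∈ (unitPartition r).part y, ∃ b ∈ (unitPartition r).part y, a / r ≠ b / r := by
  have hlt := unitColor_lt (by omega) hy hy0 hyr
  obtain h2 | h01 := le_or_gt 2 (unitColor r y)
  · left
    ext v
    simp only [unitPartition, rowPartition, mem_part_fibers]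
    refine and_congr_right fun _ => and_congr_right fun _ => ?_
    rw [div_eq_unitColor h2 hlt]
    constructor
    · intro h
      rw [h] at h2 hlt ⊢
      exact (div_eq_unitColor h2 hlt).symm
    · intro h
      rw [h, unitColor_eq_div (h ▸ h2)]
  · right
    have hfib : ∀ v, v ∈ (unitPartition r).part y ↔
        v ∈ vertices r ∧ unitColor r v = unitColor r y := fun v => by
      rw [unitPartition, mem_part_fibers, eq_comm (a := unitColor r y)]
      exact ⟨fun h => h.2, fun h => ⟨hy, h⟩⟩
    obtain h | h : unitColor r y = 0 ∨ unitColor r y = 1 := by omega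
    · have hU : (unitPartition r).part y = insert (2 * r - 1) (Ico 1 (r - 1)) := by
        ext v
        rw [hfib, h, unitColor_eq_zero_iff (by omega), mem_insert, mem_Ico]
        exact ⟨fun h => h.2, fun h => ⟨mem_vertices_of_lt hr (by omega), h⟩⟩
      rw [hU, card_insert_of_notMem (by simp; omega), Nat.card_Ico]
      refine ⟨by omega, 1, by simp; omega, 2 * r - 1, mem_insert_self _ _, ?_⟩
      rw [Nat.div_eq_of_lt (by omega), ((Nat.div_eq_iff (by omega)).2 (by omega) : _ = 1)]
      omega
    · have hU : (unitPartition r).part y = insert (r - 1) (Ico (r + 1) (2 * r - 1)) := by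
        ext v
        rw [hfib, h, unitColor_eq_one_iff (by omega), mem_insert, mem_Ico]
        exact ⟨fun h => h.2, fun h => ⟨mem_vertices_of_lt hr (by omega), h⟩⟩
      rw [hU, card_insert_of_notMem (by simp), Nat.card_Ico]
      refine ⟨by omega, r - 1, mem_insert_self _ _, r + 1, by simp; omega, ?_⟩
      rw [Nat.div_eq_of_lt (by omega), ((Nat.div_eq_iff (by omega)).2 (by omega) : _ = 1)]
      omega

theorem image_div_vertices : (vertices r).image (· / r) = range (r - 1) := by
  ext j
  simp only [mem_image, mem_range]
  refine ⟨fun ⟨v, hv, hj⟩ => hj ▸ div_lt_of_mem_vertices hv, fun hj => ⟨r * j, ?_, ?_⟩⟩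
  · simpa using mul_add_mem_vertices hj (k := 0) (by omega)
  · exact Nat.mul_div_cancel_left j (by omega)

theorem image_unitColor (hr : 4 ≤ r) : (vertices r).image (unitColor r) = range (r + 1) := by
  ext L
  simp only [mem_image, mem_range]
  constructor
  · rintro ⟨v, hv, rfl⟩
    by_cases h : v = 0 ∨ v = r
    · rcases h with rfl | rfl
      · rw [unitColor_zero]; omega
      · rw [unitColor_self (by omega)]; omega
    · have := unitColor_lt (by omega) hv (by tauto) (by tauto)
      omega
  · intro hL
    obtain hL | rfl | rfl : L < r - 1 ∨ L = r - 1 ∨ r = L := by omega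
    · obtain hL2 | rfl | rfl : 2 ≤ L ∨ L = 0 ∨ L = 1 := by omega
      · refine ⟨r * L, by simpa using mul_add_mem_vertices hL (k := 0) (by omega), ?_⟩
        rw [unitColor_eq_div] <;> rw [Nat.mul_div_cancel_left L (by omega)]
        exact hL2
      · exact ⟨1, mem_vertices_of_lt hr (by omega), (unitColor_eq_zero_iff (by omega)).2 (by omega)⟩
      · exact ⟨r + 1, mem_vertices_of_lt hr (by omega),
          (unitColor_eq_one_iff (by omega)).2 (by omega)⟩
    · exact ⟨0, mem_vertices_of_lt hr (by omega), unitColor_zero⟩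
    · exact ⟨r, mem_vertices_of_lt hr (by omega), unitColor_self (by omega)⟩

theorem image_pairColor (hr : 4 ≤ r) : (vertices r).image (pairColor r) = range r := by
  rw [show pairColor r = (min · (r - 1)) ∘ unitColor r from rfl, ← image_image,
    image_unitColor hr]
  ext L
  simp only [mem_image, mem_range]
  exact ⟨fun ⟨_, _, h⟩ => by omega, fun hL => ⟨L, by omega, by omega⟩⟩

theorem card_parts_rowPartition : #(rowPartition r).parts = r - 1 := by
  rw [rowPartition, card_parts_fibers, image_div_vertices, card_range]

theorem card_parts_unitPartition (hr : 4 ≤ r) : #(unitPartition r).parts = r + 1 := by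
  rw [unitPartition, card_parts_fibers, image_unitColor hr, card_range]

theorem card_parts_pairPartition (hr : 4 ≤ r) : #(pairPartition r).parts = r := by
  rw [pairPartition, card_parts_fibers, image_pairColor hr, card_range]

theorem exists_unitPart_subset (hr : 3 ≤ r) {C : Finset ℕ} (hC : C ∈ (rowPartition r).parts) :
    ∃ a ∈ C, (unitPartition r).part a ⊆ C := by
  obtain ⟨x, hx, rfl⟩ := (rowPartition r).part_surjOn hC
  obtain ⟨j, hjx⟩ : ∃ j, x / r = j := ⟨_, rfl⟩
  have hj : j < r - 1 := hjx ▸ div_lt_of_mem_vertices hx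
  have haX : r * j ∈ vertices r := by simpa using mul_add_mem_vertices hj (k := 0) (by omega)
  have haj : r * j / r = j := Nat.mul_div_cancel_left _ (by omega)
  refine ⟨r * j, mem_part_fibers.2 ⟨hx, haX, hjx.trans haj.symm⟩, fun v hv => ?_⟩
  obtain ⟨-, hvX, hav⟩ := mem_part_fibers.1 hv
  refine mem_part_fibers.2 ⟨hx, hvX, hjx.trans ?_⟩
  obtain rfl | rfl | h : j = 0 ∨ j = 1 ∨ 2 ≤ j := by omega
  · rw [mul_zero] at hav
    rw [eq_of_unitColor_eq hr hvX (.inl rfl) hav.symm, Nat.zero_div]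
  · rw [mul_one] at hav
    rw [eq_of_unitColor_eq hr hvX (.inr rfl) hav.symm, Nat.div_self (by omega)]
  · rw [unitColor_eq_div (by rw [haj]; exact h), haj] at hav
    rw [div_eq_unitColor (hav ▸ h) (hav ▸ hj), ← hav]

theorem card_add_two_le_of_disjoint (hr : 4 ≤ r) {B C₁ C₂ : Finset ℕ} (hB : B ⊆ vertices r)
    (hinj : Set.InjOn (unitColor r) B) (hC₁ : C₁ ∈ (rowPartition r).parts)
    (hC₂ : C₂ ∈ (rowPartition r).parts) (hC : C₁ ≠ C₂) (h₁ : Disjoint B C₁)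
    (h₂ : Disjoint B C₂) : #B + 2 ≤ r + 1 := by
  obtain ⟨a₁, ha₁, hU₁⟩ := exists_unitPart_subset (by omega) hC₁
  obtain ⟨a₂, ha₂, hU₂⟩ := exists_unitPart_subset (by omega) hC₂
  have hX₁ := (rowPartition r).subset hC₁ ha₁
  have hX₂ := (rowPartition r).subset hC₂ ha₂
  have hcol : ∀ {a v : ℕ} {C : Finset ℕ}, a ∈ vertices r → (unitPartition r).part a ⊆ C →
      v ∈ vertices r → unitColor r v = unitColor r a → v ∈ C := fun ha hU hv h =>
    hU (mem_part_fibers.2 ⟨ha, hv, h.symm⟩)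
  have hne : unitColor r a₂ ≠ unitColor r a₁ := fun h =>
    hC ((rowPartition r).eq_of_mem_parts hC₁ hC₂ (hcol hX₁ hU₁ hX₂ h) ha₂)
  have hmem : ∀ a ∈ vertices r, unitColor r a ∈ range (r + 1) := fun a ha =>
    image_unitColor hr ▸ mem_image_of_mem _ ha
  have hmaps : Set.MapsTo (unitColor r) B
      (((range (r + 1)).erase (unitColor r a₁)).erase (unitColor r a₂)) := by
    intro b hb
    simp only [coe_erase, Set.mem_sdiff, Set.mem_singleton_iff, mem_coe]
    exact ⟨⟨hmem b (hB hb), fun h => disjoint_left.1 h₁ hb (hcol hX₁ hU₁ (hB hb) h)⟩,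
      fun h => disjoint_left.1 h₂ hb (hcol hX₂ hU₂ (hB hb) h)⟩
  have := card_le_card_of_injOn _ hmaps hinj
  rw [card_erase_of_mem (mem_erase.2 ⟨hne, hmem a₂ hX₂⟩), card_erase_of_mem (hmem a₁ hX₁),
    card_range] at this
  omega

theorem exists_mem_ne_zero_ne (hr : 3 ≤ r) {e : Finset ℕ} (he : e ∈ (hypergraph r).edges) :
    ∃ z ∈ e, z ≠ 0 ∧ z ≠ r := by
  obtain ⟨z, hz, hz'⟩ := exists_mem_notMem_of_card_lt_card (s := {0, r}) (t := e)
    (card_le_two.trans_lt (by rw [(mem_edges.1 he).2.1]; omega))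
  simp only [mem_insert, mem_singleton, not_or] at hz'
  exact ⟨z, hz, hz'⟩

theorem exists_unitColor_ne (hr : 4 ≤ r) {e : Finset ℕ} {z : ℕ} (he : e ∈ (hypergraph r).edges)
    (hz : z ∈ e) (hz0 : z ≠ 0) (hzr : z ≠ r) : ∃ x ∈ e, unitColor r x ≠ unitColor r z := by
  obtain ⟨heX, hcard, ⟨x, hx, y, hy, hxy⟩, -⟩ := mem_edges.1 he
  by_contra! hconst
  have hsub : e ⊆ (unitPartition r).part z := fun v hv =>
    mem_part_fibers.2 ⟨heX hz, heX hv, (hconst v hv).symm⟩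
  rcases unitPart_eq_rowPart_or hr (heX hz) hz0 hzr with h | ⟨h, -⟩
  · rw [h] at hsub
    exact hxy ((mem_part_fibers.1 (hsub hx)).2.2.symm.trans (mem_part_fibers.1 (hsub hy)).2.2)
  · have := card_le_card hsub
    omega

theorem isStrictColoring_rowPartition :
    (hypergraph r).IsStrictColoring (rowPartition r).parts := by
  refine (isStrictColoring_fibers_iff _).2 fun e he => ⟨?_, (mem_edges.1 he).2.2.1⟩
  obtain ⟨heX, hcard, ⟨x, hx, -⟩, -⟩ := mem_edges.1 he
  refine exists_ne_map_eq_of_card_lt_of_maps_to (t := range (r - 1)) ?_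
    fun v hv => mem_range.2 (div_lt_of_mem_vertices (heX hv))
  have := card_pos.2 ⟨x, hx⟩
  rw [card_range]
  omega

theorem isStrictColoring_unitPartition (hr : 4 ≤ r) :
    (hypergraph r).IsStrictColoring (unitPartition r).parts := by
  refine (isStrictColoring_fibers_iff _).2 fun e he => ⟨(mem_edges.1 he).2.2.2, ?_⟩
  obtain ⟨z, hz, hz0, hzr⟩ := exists_mem_ne_zero_ne (by omega) he
  obtain ⟨x, hx, hxz⟩ := exists_unitColor_ne hr he hz hz0 hzr
  exact ⟨x, hx, z, hz, hxz⟩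

theorem isStrictColoring_pairPartition (hr : 4 ≤ r) :
    (hypergraph r).IsStrictColoring (pairPartition r).parts := by
  refine (isStrictColoring_fibers_iff _).2 fun e he => ⟨?_, ?_⟩
  · obtain ⟨x, hx, y, hy, hxy, h⟩ := (mem_edges.1 he).2.2.2
    exact ⟨x, hx, y, hy, hxy, by rw [pairColor, pairColor, h]⟩
  · obtain ⟨z, hz, hz0, hzr⟩ := exists_mem_ne_zero_ne (by omega) he
    obtain ⟨x, hx, hxz⟩ := exists_unitColor_ne hr he hz hz0 hzr
    have := unitColor_lt (by omega) ((mem_edges.1 he).1 hz) hz0 hzr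
    refine ⟨x, hx, z, hz, fun h => hxz ?_⟩
    unfold pairColor at h
    omega

section Classification

variable {Q : Finpartition (vertices r)}

theorem exists_edge_subset (hr : 4 ≤ r) {B : Finset ℕ} (hB : B ⊆ vertices r) (hcard : r ≤ #B)
    {a b c d : ℕ} (ha : a ∈ B) (hb : b ∈ B) (hc : c ∈ B) (hd : d ∈ B) (hab : a ≠ b)
    (hunit : unitColor r a = unitColor r b) (hrow : c / r ≠ d / r) :
    ∃ e ∈ (hypergraph r).edges, e ⊆ B := by
  obtain ⟨e, hte, heB, he⟩ := exists_subsuperset_card_eq (s := {a, b, c, d})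
    (by simp [insert_subset_iff, *]) (card_le_four.trans hr) hcard
  have hmem : ∀ v ∈ ({a, b, c, d} : Finset ℕ), v ∈ e := fun v hv => hte hv
  exact ⟨e, mem_edges.2 ⟨heB.trans hB, he, ⟨c, hmem c (by simp), d, hmem d (by simp), hrow⟩,
    a, hmem a (by simp), b, hmem b (by simp), hab, hunit⟩, heB⟩

theorem mem_rowPartition_or_injOn (hr : 4 ≤ r) (hQ : (hypergraph r).IsStrictColoring Q.parts)
    {B : Finset ℕ} (hB : B ∈ Q.parts) (hcard : r ≤ #B) :
    B ∈ (rowPartition r).parts ∨ Set.InjOn (unitColor r) B := by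
  by_contra h
  obtain ⟨hrow, hinj⟩ := not_or.1 h
  obtain ⟨c, hc⟩ := Q.nonempty_of_mem_parts hB
  have hcX := Q.subset hB hc
  obtain ⟨d, hd, hdc⟩ : ∃ d ∈ B, d ∉ (rowPartition r).part c := by
    by_contra! hsub
    have hrowc := (rowPartition r).part_mem.2 hcX
    exact hrow (eq_of_subset_of_card_le hsub
      ((card_le_of_mem_rowPartition hrowc).trans hcard) ▸ hrowc)
  obtain ⟨a, ha, b, hb, hab, hne⟩ : ∃ a ∈ B, ∃ b ∈ B, unitColor r a = unitColor r b ∧ a ≠ b := by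
    simpa [Set.InjOn] using hinj
  obtain ⟨e, he, heB⟩ := exists_edge_subset hr (Q.subset hB) hcard ha hb hc hd hne hab
    fun h => hdc (mem_part_fibers.2 ⟨hcX, Q.subset hB hd, h⟩)
  exact hQ.not_subset_of_mem_parts he hB heB

theorem card_add_one_le_of_not_mem_rowPartition (hr : 4 ≤ r)
    (hQ : (hypergraph r).IsStrictColoring Q.parts)
    {B : Finset ℕ} (hB : B ∈ Q.parts) (hrow : B ∉ (rowPartition r).parts) :
    #B + 1 ≤ r + #(B ∩ {0, r}) := by
  by_contra! hlt
  have hinj := (mem_rowPartition_or_injOn hr hQ hB (by omega)).resolve_left hrow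
  have hsdiff : #(B \ {0, r}) ≤ r - 1 := by
    refine (card_le_card_of_injOn (unitColor r) (t := range (r - 1)) (fun v hv => ?_)
      (hinj.mono (coe_subset.2 sdiff_subset))).trans (card_range _).le
    obtain ⟨hvB, hv⟩ := mem_sdiff.1 hv
    simp only [mem_insert, mem_singleton, not_or] at hv
    exact mem_range.2 (unitColor_lt (by omega) (Q.subset hB hvB) hv.1 hv.2)
  have := card_sdiff_add_card_inter B {0, r}
  omega

theorem card_le_of_mem_parts (hr : 4 ≤ r) (hQ : (hypergraph r).IsStrictColoring Q.parts)
    {B : Finset ℕ} (hB : B ∈ Q.parts) : #B ≤ r + 1 := by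
  by_cases hrow : B ∈ (rowPartition r).parts
  · exact (card_le_of_mem_rowPartition hrow).trans r.le_succ
  · have := card_add_one_le_of_not_mem_rowPartition hr hQ hB hrow
    have : #(B ∩ {0, r}) ≤ 2 := (card_le_card inter_subset_right).trans card_le_two
    omega

theorem sub_one_le_card_parts (hr : 4 ≤ r) (hQ : (hypergraph r).IsStrictColoring Q.parts) :
    r - 1 ≤ #Q.parts := by
  by_contra! h
  have hsum : ∑ B ∈ Q.parts, #B = r * (r - 1) - 1 := Q.sum_card_parts.trans card_vertices
  have hle := sum_le_card_nsmul Q.parts (fun B => #B) (r + 1) fun B hB =>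
    card_le_of_mem_parts hr hQ hB
  rw [smul_eq_mul] at hle
  have : #Q.parts * (r + 1) ≤ (r - 2) * (r + 1) := Nat.mul_le_mul_right _ (by omega)
  have : (r - 2) * (r + 1) + 2 = r * (r - 1) := by
    obtain ⟨k, rfl⟩ : ∃ k, r = k + 2 := ⟨r - 2, by omega⟩
    rw [show k + 2 - 2 = k by omega, show k + 2 - 1 = k + 1 by omega]
    ring
  omega

theorem part_eq_part_of_unitColor_eq (hr : 5 ≤ r) (hQ : (hypergraph r).IsStrictColoring Q.parts)
    (hk : r ≤ #Q.parts) {x y : ℕ} (hx : x ∈ vertices r) (hy : y ∈ vertices r)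
    (h : unitColor r x = unitColor r y) : Q.part x = Q.part y := by
  by_contra hxy
  have hne : x ≠ y := by rintro rfl; exact hxy rfl
  -- a vertex `c` outside the classes of `x`, `y` and the row of `x` makes `{x, y, c}` extend to a
  -- rainbow bi-edge
  have hlt : #(Q.part x ∪ Q.part y ∪ (rowPartition r).part x) < #(vertices r) := by
    have := card_le_of_mem_parts (by omega) hQ (Q.part_mem.2 hx)
    have := card_le_of_mem_parts (by omega) hQ (Q.part_mem.2 hy)
    have := card_le_of_mem_rowPartition ((rowPartition r).part_mem.2 hx)
    have := card_union_le (Q.part x ∪ Q.part y) ((rowPartition r).part x)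
    have := card_union_le (Q.part x) (Q.part y)
    have : r * 4 ≤ r * (r - 1) := Nat.mul_le_mul_left r (by omega)
    rw [card_vertices]
    omega
  obtain ⟨c, hc, hcU⟩ := exists_mem_notMem_of_card_lt_card hlt
  simp only [mem_union, not_or] at hcU
  obtain ⟨⟨hcx, hcy⟩, hcrow⟩ := hcU
  have hcx' : Q.part c ≠ Q.part x := fun h => hcx ((Q.mem_part_iff_part_eq_part hc hx).2 h)
  have hcy' : Q.part c ≠ Q.part y := fun h => hcy ((Q.mem_part_iff_part_eq_part hc hy).2 h)
  have hinj : Set.InjOn Q.part ({x, y, c} : Finset ℕ) := by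
    intro u hu v hv huv
    simp only [coe_insert, coe_singleton, Set.mem_insert_iff, Set.mem_singleton_iff] at hu hv
    rcases hu with rfl | rfl | rfl <;> rcases hv with rfl | rfl | rfl <;>
      first | rfl | exact absurd huv ‹_› | exact absurd huv.symm ‹_›
  obtain ⟨e, hte, heX, he, hinje⟩ := Q.exists_injOn_part_superset (t := {x, y, c})
    (by simp [insert_subset_iff, *]) hinj (card_le_three.trans (by omega)) hk
  refine hQ.not_injOn_part_s16 (mem_edges.2 ⟨heX, he, ⟨x, hte (by simp), c, hte (by simp), ?_⟩,
    x, hte (by simp), y, hte (by simp), hne, h⟩) hinje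
  exact fun h' => hcrow (mem_part_fibers.2 ⟨hx, hc, h'⟩)

theorem unitColor_eq_of_part_eq (hr : 5 ≤ r) (hQ : (hypergraph r).IsStrictColoring Q.parts)
    (hk : r ≤ #Q.parts) {x y : ℕ} (hx : x ∈ vertices r) (hy : y ∈ vertices r) (hy0 : y ≠ 0)
    (hyr : y ≠ r) (h : Q.part x = Q.part y) : unitColor r x = unitColor r y := by
  by_contra hne
  have hU := unitPart_eq_rowPart_or (by omega) hy hy0 hyr
  set U := (unitPartition r).part y
  have hUB : U ⊆ Q.part y := fun v hv => by
    obtain ⟨-, hv, hyv⟩ := mem_part_fibers.1 hv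
    exact (Q.mem_part_iff_part_eq_part hv hy).2
      (part_eq_part_of_unitColor_eq hr hQ hk hv hy hyv.symm)
  have hxU : x ∉ U := fun hxU => hne (mem_part_fibers.1 hxU).2.2.symm
  have hxB : x ∈ Q.part y := h ▸ Q.mem_part hx
  have hcardU : r - 1 ≤ #U := by
    rcases hU with hU | hU
    · rw [hU]; exact le_card_of_mem_rowPartition ((rowPartition r).part_mem.2 hy)
    · exact hU.1.ge
  have hcardB : r ≤ #(Q.part y) := by
    have := card_le_card (insert_subset hxB hUB)
    rw [card_insert_of_notMem hxU] at this
    omega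
  rcases mem_rowPartition_or_injOn (by omega) hQ (Q.part_mem.2 hy) hcardB with hrow | hinj
  · rcases hU with hU | ⟨-, a, ha, b, hb, hab⟩
    · have : Q.part y = (rowPartition r).part y :=
        ((rowPartition r).part_eq_of_mem hrow (Q.mem_part hy)).symm
      exact hxU (hU ▸ this ▸ hxB)
    · have haX := (unitPartition r).part_subset y ha
      have hbX := (unitPartition r).part_subset y hb
      refine hab ((part_fibers_eq_part_iff (f := (· / r)) haX hbX).1 ?_)
      exact ((rowPartition r).part_eq_of_mem hrow (hUB ha)).trans
        ((rowPartition r).part_eq_of_mem hrow (hUB hb)).symm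
  · obtain ⟨a, ha, b, hb, hab⟩ := one_lt_card.1 (by omega : 1 < #U)
    exact hab (hinj (hUB ha) (hUB hb)
      ((mem_part_fibers.1 ha).2.2.symm.trans (mem_part_fibers.1 hb).2.2))

theorem eq_unitPartition_or_eq_pairPartition (hr : 5 ≤ r)
    (hQ : (hypergraph r).IsStrictColoring Q.parts) (hk : r ≤ #Q.parts) :
    Q = unitPartition r ∨ Q = pairPartition r := by
  have hpair : ∀ x ∈ vertices r, ∀ y ∈ vertices r,
      Q.part x = Q.part y → pairColor r x = pairColor r y := by
    intro x hx y hy h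
    rw [pairColor_eq_iff (by omega) hx hy]
    by_cases hy' : y = 0 ∨ y = r
    · by_cases hx' : x = 0 ∨ x = r
      · exact .inr ⟨hx', hy'⟩
      · exact .inl (unitColor_eq_of_part_eq hr hQ hk hy hx (by tauto) (by tauto) h.symm).symm
    · exact .inl (unitColor_eq_of_part_eq hr hQ hk hx hy (by tauto) (by tauto) h)
  by_cases h0r : Q.part 0 = Q.part r
  · right
    refine ext_of_part_eq_part_iff fun x hx y hy => ?_
    rw [pairPartition, part_fibers_eq_part_iff hx hy]
    refine ⟨hpair x hx y hy, fun h => ?_⟩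
    rcases (pairColor_eq_iff (by omega) hx hy).1 h with h | ⟨hx', hy'⟩
    · exact part_eq_part_of_unitColor_eq hr hQ hk hx hy h
    · rcases hx' with rfl | rfl <;> rcases hy' with rfl | rfl <;>
        first | rfl | exact h0r | exact h0r.symm
  · left
    refine ext_of_part_eq_part_iff fun x hx y hy => ?_
    rw [unitPartition, part_fibers_eq_part_iff hx hy]
    refine ⟨fun h => ?_, part_eq_part_of_unitColor_eq hr hQ hk hx hy⟩
    rcases (pairColor_eq_iff (by omega) hx hy).1 (hpair x hx y hy h) with h' | ⟨hx', hy'⟩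
    · exact h'
    · rcases hx' with rfl | rfl <;> rcases hy' with rfl | rfl <;>
        first | rfl | exact absurd h h0r | exact absurd h.symm h0r

def nonRowClasses (Q : Finpartition (vertices r)) : Finset (Finset ℕ) :=
  Q.parts.filter (· ∉ (rowPartition r).parts)

theorem card_nonRowClasses_mul_le (hk : #Q.parts = r - 1) :
    #(nonRowClasses Q) * r ≤ ∑ B ∈ nonRowClasses Q, #B + 1 := by
  set F := Q.parts.filter (· ∈ (rowPartition r).parts)
  have hFN : #F + #(nonRowClasses Q) = r - 1 := hk ▸ card_filter_add_card_filter_not _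
  have hsum : ∑ B ∈ F, #B + ∑ B ∈ nonRowClasses Q, #B = r * (r - 1) - 1 := by
    rw [nonRowClasses, sum_filter_add_sum_filter_not, Q.sum_card_parts, card_vertices]
  have hF : ∑ B ∈ F, #B ≤ #F * r := by
    simpa using sum_le_card_nsmul F (fun B => #B) r fun B hB =>
      card_le_of_mem_rowPartition (mem_filter.1 hB).2
  have : #F * r + #(nonRowClasses Q) * r = r * (r - 1) := by rw [← add_mul, hFN, mul_comm]
  omega

theorem card_nonRowClasses_le_three (hr : 4 ≤ r) (hQ : (hypergraph r).IsStrictColoring Q.parts)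
    (hk : #Q.parts = r - 1) : #(nonRowClasses Q) ≤ 3 := by
  have h1 : ∑ B ∈ nonRowClasses Q, (#B + 1) ≤ ∑ B ∈ nonRowClasses Q, (r + #(B ∩ {0, r})) :=
    sum_le_sum fun B hB =>
      card_add_one_le_of_not_mem_rowPartition hr hQ (mem_filter.1 hB).1 (mem_filter.1 hB).2
  have h2 : ∑ B ∈ nonRowClasses Q, #(B ∩ {0, r}) ≤ 2 := calc
    _ ≤ ∑ B ∈ Q.parts, #(B ∩ {0, r}) := sum_le_sum_of_subset (filter_subset _ _)
    _ = #{0, r} := Q.sum_card_inter (insert_subset (mem_vertices_of_lt hr (by omega))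
        (singleton_subset_iff.2 (mem_vertices_of_lt hr (by omega))))
    _ ≤ 2 := card_le_two
  rw [sum_add_distrib, sum_add_distrib, sum_const, sum_const, smul_eq_mul, smul_eq_mul,
    mul_one] at h1
  have := card_nonRowClasses_mul_le hk
  omega

theorem card_le_of_mem_nonRowClasses (hr : 6 ≤ r) (hQ : (hypergraph r).IsStrictColoring Q.parts)
    (hk : #Q.parts = r - 1) {B : Finset ℕ} (hB : B ∈ nonRowClasses Q) : #B ≤ r - 1 := by
  obtain ⟨hBQ, hBR⟩ := mem_filter.1 hB
  by_contra! hcard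
  -- at least `r - 4 ≥ 2` classes are rows
  have hF := card_filter_add_card_filter_not (s := Q.parts) (· ∈ (rowPartition r).parts)
  have := card_nonRowClasses_le_three (by omega) hQ hk
  obtain ⟨C₁, hC₁, C₂, hC₂, hC⟩ := one_lt_card.1 (by rw [nonRowClasses] at this; omega :
    1 < #(Q.parts.filter (· ∈ (rowPartition r).parts)))
  rw [mem_filter] at hC₁ hC₂
  have hdisj : ∀ {C}, C ∈ Q.parts → C ∈ (rowPartition r).parts → Disjoint B C := fun hCQ hCR =>
    Q.disjoint hBQ hCQ fun h => hBR (h ▸ hCR)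
  have := card_add_two_le_of_disjoint (by omega) (Q.subset hBQ)
    ((mem_rowPartition_or_injOn (by omega) hQ hBQ (by omega)).resolve_left hBR) hC₁.2 hC₂.2 hC
    (hdisj hC₁.1 hC₁.2) (hdisj hC₂.1 hC₂.2)
  omega

theorem eq_rowPartition (hr : 6 ≤ r) (hQ : (hypergraph r).IsStrictColoring Q.parts)
    (hk : #Q.parts = r - 1) : Q = rowPartition r := by
  set R := rowPartition r
  have hsmall : ∀ B ∈ nonRowClasses Q, #B ≤ r - 1 := fun _ hB =>
    card_le_of_mem_nonRowClasses hr hQ hk hB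
  have hN1 : #(nonRowClasses Q) ≤ 1 := by
    have hN := sum_le_card_nsmul _ (fun B => #B) (r - 1) hsmall
    rw [smul_eq_mul, Nat.mul_sub_one] at hN
    have := card_nonRowClasses_mul_le hk
    have : #(nonRowClasses Q) ≤ #(nonRowClasses Q) * r := Nat.le_mul_of_pos_right _ (by omega)
    omega
  have hRQ : R.parts ⊆ Q.parts := by
    intro C hC
    by_contra hCQ
    have hN : ∀ x ∈ C, Q.part x ∈ nonRowClasses Q := fun x hx => by
      have hxX := R.subset hC hx
      refine mem_filter.2 ⟨Q.part_mem.2 hxX, fun h => hCQ ?_⟩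
      exact R.eq_of_mem_parts h hC (Q.mem_part hxX) hx ▸ Q.part_mem.2 hxX
    obtain ⟨x, hx⟩ := R.nonempty_of_mem_parts hC
    have hCB : C ⊆ Q.part x := fun y hy =>
      card_le_one.1 hN1 _ (hN y hy) _ (hN x hx) ▸ Q.mem_part (R.subset hC hy)
    have := eq_of_subset_of_card_le hCB
      ((hsmall _ (hN x hx)).trans (le_card_of_mem_rowPartition hC))
    exact hCQ (this ▸ Q.part_mem.2 (R.subset hC hx))
  exact (Finpartition.ext (eq_of_subset_of_card_le hRQ (by rw [hk, card_parts_rowPartition]))).symm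

end Classification

theorem isStrictColoring_iff (hr : 6 ≤ r) {P : Finset (Finset ℕ)} :
    (hypergraph r).IsStrictColoring P ↔
      P = (unitPartition r).parts ∨ P = (pairPartition r).parts ∨ P = (rowPartition r).parts := by
  refine ⟨fun hP => ?_, ?_⟩
  · obtain ⟨Q, rfl⟩ := hP.exists_finpartition
    obtain hk | hk := (sub_one_le_card_parts (by omega) hP).eq_or_lt
    · exact .inr (.inr (congrArg _ (eq_rowPartition hr hP hk.symm)))
    · rcases eq_unitPartition_or_eq_pairPartition (by omega) hP (by omega) with h | h
      exacts [.inl (congrArg _ h), .inr (.inl (congrArg _ h))]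
  · rintro (rfl | rfl | rfl)
    exacts [isStrictColoring_unitPartition (by omega), isStrictColoring_pairPartition (by omega),
      isStrictColoring_rowPartition]

end ConsecutiveRealization

open ConsecutiveRealization

theorem stmt16 (r : ℕ) (hr : 6 ≤ r) :
    ∃ H : BiHypergraph ℕ, H.IsUniform r ∧
      H.verts.card = r * (r - 1) - 1 ∧
      H.IsOneRealization {r + 1, r, r - 1} := by
  have hcard := card_parts_unitPartition (r := r) (by omega)
  have hcard' := card_parts_pairPartition (r := r) (by omega)
  have hcard'' := card_parts_rowPartition (r := r)
  refine ⟨hypergraph r, fun e he => (mem_edges.1 he).2.1, card_vertices, ?_, ?_⟩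
  · ext k
    simp only [BiHypergraph.feasibleSet, isStrictColoring_iff hr, Set.mem_ofPred_eq, coe_insert,
      coe_singleton, Set.mem_insert_iff, Set.mem_singleton_iff]
    constructor
    · rintro ⟨P, rfl | rfl | rfl, rfl⟩ <;> omega
    · rintro (rfl | rfl | rfl)
      exacts [⟨_, .inl rfl, hcard⟩, ⟨_, .inr (.inl rfl), hcard'⟩, ⟨_, .inr (.inr rfl), hcard''⟩]
  · intro P P' hP hP' hPP'
    rw [isStrictColoring_iff hr] at hP hP'
    rcases hP with rfl | rfl | rfl <;> rcases hP' with rfl | rfl | rfl <;> first | rfl | omega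
end
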